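/- arXiv:1506.02696 — 6 statements merged into one kernel-verified Lean document; each statement's English description precedes it below -/
import Mathlib

section
/- Let A be an integral domain which is not a field, and let n be a non-negative integer. Then every n-universal subset of A has at least n+1 elements. -/
/-!
If `S` has at most `n` elements, pick `a ∈ A \ S` (a domain that is not a field is infinite)
and a nonzero nonunit `t`. The polynomial of degree `#S ≤ n` that vanishes on `S` and takes the
value `1 / t` at `a` maps `S` into `A` but not `A` into `A`.
-/

/-- A finite subset `S` of an integral domain `A` with field of fractions `K` is
`n`-universal if for every polynomial `P ∈ K[X]` of degree at most `n`, `P` maps `A`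
into `A` if and only if `P` maps `S` into `A` (where "into `A`" means into the image
of `A` in `K`). -/
def IsNUniversal (A K : Type*) [CommRing A] [IsDomain A] [Field K] [Algebra A K]
    [IsFractionRing A K] (n : ℕ) (S : Finset A) : Prop :=
  ∀ P : Polynomial K, P.natDegree ≤ n →
    ((∀ a : A, ∃ b : A, Polynomial.eval (algebraMap A K a) P = algebraMap A K b) ↔
      ∀ s ∈ S, ∃ b : A, Polynomial.eval (algebraMap A K s) P = algebraMap A K b)

open Polynomial

theorem Polynomial.exists_natDegree_le_card_eval_eq_zero_eval_eq {K ι : Type*} [Field K]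
    (s : Finset ι) (v : ι → K) {x : K} (hx : ∀ i ∈ s, x ≠ v i) (y : K) :
    ∃ P : K[X], P.natDegree ≤ s.card ∧ (∀ i ∈ s, P.eval (v i) = 0) ∧ P.eval x = y := by
  have hnode : (Lagrange.nodal s v).eval x ≠ 0 := Lagrange.eval_nodal_not_at_node hx
  refine ⟨C (y / (Lagrange.nodal s v).eval x) * Lagrange.nodal s v, ?_, fun i hi => ?_, ?_⟩
  · exact (natDegree_C_mul_le _ _).trans (Lagrange.natDegree_nodal).le
  · rw [eval_mul, Lagrange.eval_nodal_at_node hi, mul_zero]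
  · rw [eval_mul, eval_C, div_mul_cancel₀ y hnode]

theorem IsFractionRing.inv_algebraMap_ne_algebraMap {A K : Type*} [CommRing A] [Field K]
    [Algebra A K] [IsFractionRing A K] {t : A} (ht0 : t ≠ 0) (ht : ¬IsUnit t) (b : A) :
    (algebraMap A K t)⁻¹ ≠ algebraMap A K b := by
  intro h
  have htK : algebraMap A K t ≠ 0 := (map_ne_zero_iff _ (IsFractionRing.injective A K)).mpr ht0
  have htb : algebraMap A K (t * b) = algebraMap A K 1 := by
    rw [map_mul, ← h, mul_inv_cancel₀ htK, map_one]
  exact ht (IsUnit.of_mul_eq_one b (IsFractionRing.injective A K htb))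

/-- Every `n`-universal subset of an integral domain which is not a field has at least
`n + 1` elements. -/
theorem stmt0 {A K : Type*} [CommRing A] [IsDomain A] [Field K] [Algebra A K]
    [IsFractionRing A K] (hA : ¬ IsField A) (n : ℕ) (S : Finset A)
    (hS : IsNUniversal A K n S) : n + 1 ≤ S.card := by
  by_contra! hcard
  obtain ⟨t, ht0, ht⟩ := Ring.exists_not_isUnit_of_not_isField hA
  have : Infinite A := not_finite_iff_infinite.mp fun _ => hA (Finite.isField_of_domain A)
  obtain ⟨a, haS⟩ := Infinite.exists_notMem_finset S
  have ha : ∀ s ∈ S, algebraMap A K a ≠ algebraMap A K s := fun s hs h =>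
    haS (IsFractionRing.injective A K h ▸ hs)
  obtain ⟨P, hdeg, hPS, hPa⟩ :=
    exists_natDegree_le_card_eval_eq_zero_eval_eq S (algebraMap A K) ha (algebraMap A K t)⁻¹
  obtain ⟨b, hb⟩ := (hS P (by omega)).mpr (fun s hs => ⟨0, by rw [hPS s hs, map_zero]⟩) a
  exact IsFractionRing.inv_algebraMap_ne_algebraMap ht0 ht b (hPa ▸ hb)
end

section
/- Let n be a non-negative integer and let S be a subset of ℤ with exactly n+1 elements. Then S is n-universal in ℤ if and only if S = {a, a+1, …, a+n} for some a ∈ ℤ. -/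
open Polynomial

section Aux

lemma coeff_comp_X_add_one (g : ℤ[X]) (N j : ℕ) (h : g.natDegree < N) :
    (g.comp (X + 1)).coeff j = ∑ k ∈ Finset.range N, g.coeff k * (k.choose j) := by
  conv_lhs => rw [g.as_sum_range' N h]
  rw [← Polynomial.lcoeff_apply]
  simp only [Polynomial.eval₂_finset_sum, Polynomial.comp, map_sum]
  simp [Polynomial.eval₂_monomial, Polynomial.lcoeff_apply, Polynomial.coeff_C_mul,
    Polynomial.coeff_X_add_one_pow]

lemma dvd_factorial_mul_coeff : ∀ (n : ℕ) (g : ℤ[X]) (D : ℤ), g.natDegree ≤ n →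
    (∀ x : ℤ, D ∣ g.eval x) → D ∣ (n.factorial : ℤ) * g.coeff n := by
  intro n
  induction n with
  | zero =>
    intro g D hdeg hdvd
    have := hdvd 0
    rw [g.eq_C_of_natDegree_le_zero hdeg] at this
    simpa using this
  | succ n ih =>
    intro g D hdeg hdvd
    set h : ℤ[X] := g.comp (X + 1) - g with hh
    have hlt : g.natDegree < n + 2 := by omega
    have hczero : ∀ j : ℕ, n < j → h.coeff j = 0 := by
      intro j hj
      rw [hh, Polynomial.coeff_sub, coeff_comp_X_add_one g (n+2) j hlt]
      rw [Finset.sum_eq_single j]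
      · simp
      · intro k hk hkj
        simp only [Finset.mem_range] at hk
        rcases lt_or_gt_of_ne hkj with hlt' | hgt
        · simp [Nat.choose_eq_zero_of_lt hlt']
        · omega
      · intro hj'
        simp at hj'
        have : g.coeff j = 0 := Polynomial.coeff_eq_zero_of_natDegree_lt (by omega)
        simp [this]
    have hdegh : h.natDegree ≤ n := Polynomial.natDegree_le_iff_coeff_eq_zero.mpr hczero
    have hcn : h.coeff n = (n + 1 : ℤ) * g.coeff (n + 1) := by
      rw [hh, Polynomial.coeff_sub, coeff_comp_X_add_one g (n+2) n hlt]
      rw [Finset.sum_range_succ, Finset.sum_range_succ]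
      rw [Finset.sum_eq_zero (fun k hk => by
        simp at hk
        simp [Nat.choose_eq_zero_of_lt hk])]
      simp [Nat.choose_succ_self_right]
      ring
    have hdvdh : ∀ x : ℤ, D ∣ h.eval x := by
      intro x
      have : h.eval x = g.eval (x + 1) - g.eval x := by
        simp [hh, Polynomial.eval_comp]
      rw [this]
      exact dvd_sub (hdvd (x + 1)) (hdvd x)
    have := ih h D hdegh hdvdh
    rw [hcn] at this
    have heq : ((n+1).factorial : ℤ) * g.coeff (n+1) =
        (n.factorial : ℤ) * ((n + 1 : ℤ) * g.coeff (n + 1)) := by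
      rw [Nat.factorial_succ]
      push_cast
      ring
    rw [heq]
    exact this


lemma intval : ∀ (n : ℕ) (P : ℚ[X]) (a : ℤ), P.natDegree ≤ n →
    (∀ k ∈ Finset.Icc a (a + (n : ℤ)), ∃ b : ℤ, P.eval (k : ℚ) = (b : ℚ)) →
    ∀ x : ℤ, ∃ b : ℤ, P.eval (x : ℚ) = (b : ℚ) := by
  intro n
  induction n with
  | zero =>
    intro P a hdeg hv x
    obtain ⟨b, hb⟩ := hv a (by simp)
    rw [P.eq_C_of_natDegree_le_zero hdeg] at hb ⊢
    simp only [Polynomial.eval_C] at hb ⊢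
    exact ⟨b, hb⟩
  | succ n ih =>
    intro P a hdeg hv
    by_cases hP0 : P.natDegree = 0
    · intro x
      obtain ⟨b, hb⟩ := hv a (by simp; positivity)
      rw [P.eq_C_of_natDegree_le_zero (le_of_eq hP0)] at hb ⊢
      simp only [Polynomial.eval_C] at hb ⊢
      exact ⟨b, hb⟩
    · set Q : ℚ[X] := P.comp (X + 1) - P with hQ
      have hPne : P ≠ 0 := fun h => hP0 (by simp [h])
      have hX1 : ((X + 1 : ℚ[X])).natDegree = 1 := by
        simpa using Polynomial.natDegree_X_add_C (1 : ℚ)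
      have hcompdeg : (P.comp (X + 1)).natDegree = P.natDegree := by
        rw [Polynomial.natDegree_comp, hX1, mul_one]
      have hcompne : P.comp (X + 1) ≠ 0 := fun h => by
        rw [h] at hcompdeg; simp at hcompdeg; exact hP0 hcompdeg.symm
      have hlc : (P.comp (X + 1)).leadingCoeff = P.leadingCoeff := by
        rw [Polynomial.leadingCoeff_comp (by rw [hX1]; exact one_ne_zero)]
        have : (X + 1 : ℚ[X]).leadingCoeff = 1 := by
          simpa using Polynomial.leadingCoeff_X_add_C (1 : ℚ)
        rw [this, one_pow, mul_one]
      have hdd : (P.comp (X + 1)).degree = P.degree := by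
        rw [Polynomial.degree_eq_natDegree hcompne, Polynomial.degree_eq_natDegree hPne,
          hcompdeg]
      have hdegsub : Q.degree < P.degree := by
        have := Polynomial.degree_sub_lt hdd hcompne hlc
        rw [hQ]
        exact hdd ▸ this
      have hQdeg : Q.natDegree ≤ n := by
        by_cases hQ0 : Q = 0
        · simp [hQ0]
        · have := Polynomial.natDegree_lt_natDegree hQ0 hdegsub
          omega
      have hQval : ∀ k ∈ Finset.Icc a (a + (n : ℤ)), ∃ b : ℤ, Q.eval (k : ℚ) = (b : ℚ) := by
        intro k hk
        simp only [Finset.mem_Icc] at hk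
        obtain ⟨b1, hb1⟩ := hv (k + 1) (by simp only [Finset.mem_Icc]; push_cast; omega)
        obtain ⟨b2, hb2⟩ := hv k (by simp only [Finset.mem_Icc]; push_cast; omega)
        refine ⟨b1 - b2, ?_⟩
        rw [hQ]
        simp only [Polynomial.eval_sub, Polynomial.eval_comp, Polynomial.eval_add,
          Polynomial.eval_X, Polynomial.eval_one]
        push_cast at hb1 ⊢
        rw [hb1, hb2]
      have hQint : ∀ x : ℤ, ∃ b : ℤ, Q.eval (x : ℚ) = (b : ℚ) := ih Q a hQdeg hQval
      have hstep : ∀ x : ℤ, P.eval ((x : ℚ) + 1) = P.eval (x : ℚ) + Q.eval (x : ℚ) := by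
        intro x
        rw [hQ]
        simp [Polynomial.eval_comp]
      intro x
      refine Int.inductionOn' x a ?_ ?_ ?_
      · exact hv a (by simp; positivity)
      · intro k _ ihk
        obtain ⟨b, hb⟩ := ihk
        obtain ⟨c, hc⟩ := hQint k
        refine ⟨b + c, ?_⟩
        push_cast
        rw [hstep k, hb, hc]
      · intro k _ ihk
        obtain ⟨b, hb⟩ := ihk
        obtain ⟨c, hc⟩ := hQint (k - 1)
        refine ⟨b - c, ?_⟩
        have h2 := hstep (k - 1)
        push_cast at h2 ⊢
        rw [sub_add_cancel] at h2
        push_cast at hc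
        rw [hb, hc] at h2
        linarith


lemma prod_factorial_aux : ∀ (n : ℕ) (T : Finset ℤ), T.card = n → (∀ t ∈ T, 0 < t) →
    ((n.factorial : ℤ) ≤ ∏ t ∈ T, t ∧ ((∏ t ∈ T, t) = (n.factorial : ℤ) → T = Finset.Icc 1 (n:ℤ))) := by
  intro n
  induction n with
  | zero =>
    intro T hcard _
    rw [Finset.card_eq_zero] at hcard
    subst hcard
    simp
  | succ n ih =>
    intro T hcard hpos
    have hne : T.Nonempty := Finset.card_pos.mp (by omega)
    set m := T.max' hne with hm
    have hmT : m ∈ T := T.max'_mem hne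
    have hsub : T ⊆ Finset.Icc 1 m := by
      intro t ht
      simp only [Finset.mem_Icc]
      exact ⟨hpos t ht, T.le_max' t ht⟩
    have hmn : (n : ℤ) + 1 ≤ m := by
      have h1 := Finset.card_le_card hsub
      rw [hcard] at h1
      have h2 : (Finset.Icc (1:ℤ) m).card = (m + 1 - 1).toNat := Int.card_Icc 1 m
      rw [h2] at h1
      omega
    set T' := T.erase m with hT'
    have hcard' : T'.card = n := by
      rw [hT', Finset.card_erase_of_mem hmT, hcard]
      omega
    have hpos' : ∀ t ∈ T', 0 < t := fun t ht => hpos t (Finset.mem_of_mem_erase ht)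
    obtain ⟨ihle, iheq⟩ := ih T' hcard' hpos'
    have hfacpos : (0:ℤ) < (n.factorial : ℤ) := by positivity
    have hprodT : (∏ t ∈ T, t) = m * ∏ t ∈ T', t := (Finset.mul_prod_erase T _ hmT).symm
    have hprodpos : (0:ℤ) < ∏ t ∈ T', t := lt_of_lt_of_le hfacpos ihle
    constructor
    · rw [hprodT]
      calc ((n+1).factorial : ℤ) = ((n:ℤ) + 1) * (n.factorial : ℤ) := by
            rw [Nat.factorial_succ]; push_cast; ring
        _ ≤ m * ∏ t ∈ T', t := by
            apply mul_le_mul hmn ihle (le_of_lt hfacpos)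
            omega
    · intro heq
      rw [hprodT] at heq
      rw [Nat.factorial_succ] at heq
      push_cast at heq
      have h3 : ((n:ℤ)+1) * (n.factorial:ℤ) = m * ∏ t ∈ T', t := by
        linarith
      have hm1 : m = (n:ℤ) + 1 := by
        by_contra hne'
        have : (n:ℤ) + 2 ≤ m := by omega
        nlinarith
      have hprod' : (∏ t ∈ T', t) = (n.factorial : ℤ) := by
        rw [hm1] at h3
        have hne0 : ((n:ℤ)+1) ≠ 0 := by positivity
        have := mul_left_cancel₀ hne0 h3
        linarith
      have hIcc := iheq hprod'
      have : T = insert m T' := (Finset.insert_erase hmT).symm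
      rw [this, hIcc, hm1]
      ext x
      simp only [Finset.mem_insert, Finset.mem_Icc]
      push_cast
      omega

end Aux

/-- A subset of `ℤ` with exactly `n + 1` elements is `n`-universal if and only if it is
a set of `n + 1` consecutive integers `{a, a+1, …, a+n}`. -/
theorem stmt1 (n : ℕ) (S : Finset ℤ) (hcard : S.card = n + 1) :
    IsNUniversal ℤ ℚ n S ↔ ∃ a : ℤ, S = Finset.Icc a (a + n) := by
  have halg : ∀ x : ℤ, algebraMap ℤ ℚ x = (x : ℚ) := fun x => eq_intCast (algebraMap ℤ ℚ) x
  constructor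
  · intro h
    have hne : S.Nonempty := Finset.card_pos.mp (by omega)
    set s0 := S.min' hne with hs0
    have hs0S : s0 ∈ S := S.min'_mem hne
    set E := S.erase s0 with hE
    have hcardE : E.card = n := by
      rw [hE, Finset.card_erase_of_mem hs0S, hcard]
      omega
    set g : ℤ[X] := ∏ s ∈ E, (X - C s) with hg
    have hmonic : g.Monic := monic_prod_of_monic _ _ fun s _ => monic_X_sub_C s
    have hdegg : g.natDegree = n := by
      rw [hg, natDegree_prod _ _ fun s _ => X_sub_C_ne_zero s]
      rw [Finset.sum_congr rfl (fun (s : ℤ) _ => natDegree_X_sub_C s)]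
      simp [hcardE]
    have hevalg : ∀ x : ℤ, g.eval x = ∏ s ∈ E, (x - s) := by
      intro x; rw [hg, eval_prod]; simp
    set D : ℤ := ∏ s ∈ E, (s0 - s) with hD
    have hDne : D ≠ 0 := by
      rw [hD]
      apply Finset.prod_ne_zero_iff.mpr
      intro s hs
      have hne' : s ≠ s0 := Finset.ne_of_mem_erase hs
      intro hc
      apply hne'
      omega
    have hDQ : (D : ℚ) ≠ 0 := Int.cast_ne_zero.mpr hDne
    set P : ℚ[X] := Polynomial.C ((D : ℚ)⁻¹) * g.map (Int.castRingHom ℚ) with hP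
    have hdegP : P.natDegree ≤ n := by
      rw [hP]
      refine le_trans natDegree_mul_le ?_
      simp only [natDegree_C, zero_add]
      exact le_trans natDegree_map_le (le_of_eq hdegg)
    have hevalP : ∀ x : ℤ, P.eval (x : ℚ) = (D : ℚ)⁻¹ * ((g.eval x : ℤ) : ℚ) := by
      intro x
      rw [hP]
      simp
    have hvals : ∀ s ∈ S, ∃ b : ℤ, P.eval (algebraMap ℤ ℚ s) = algebraMap ℤ ℚ b := by
      intro s hs
      by_cases hss : s = s0
      · refine ⟨1, ?_⟩
        rw [halg, halg, hevalP]
        have hg0 : g.eval s = D := by rw [hevalg, hss, hD]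
        rw [hg0]
        push_cast
        rw [inv_mul_cancel₀ hDQ]
      · refine ⟨0, ?_⟩
        have hsE : s ∈ E := Finset.mem_erase.mpr ⟨hss, hs⟩
        have hg0 : g.eval s = 0 := by
          rw [hevalg]
          exact Finset.prod_eq_zero hsE (sub_self s)
        rw [halg, halg, hevalP, hg0]
        simp
    have hall := (h P hdegP).mpr hvals
    have hdvd : ∀ x : ℤ, D ∣ g.eval x := by
      intro x
      obtain ⟨b, hb⟩ := hall x
      rw [halg, halg, hevalP] at hb
      refine ⟨b, ?_⟩
      rw [inv_mul_eq_iff_eq_mul₀ hDQ] at hb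
      exact_mod_cast hb
    have hdvdfac : D ∣ (n.factorial : ℤ) := by
      have hdd := dvd_factorial_mul_coeff n g D (le_of_eq hdegg) hdvd
      have hc : g.coeff n = 1 := by
        rw [← hdegg]
        exact hmonic.coeff_natDegree
      rwa [hc, mul_one] at hdd
    set T := E.image (fun s => s - s0) with hT
    have hinj : ∀ x ∈ E, ∀ y ∈ E, x - s0 = y - s0 → x = y := by
      intro x _ y _ hxy; omega
    have hcardT : T.card = n := by
      rw [hT, Finset.card_image_of_injOn hinj, hcardE]
    have hposT : ∀ t ∈ T, 0 < t := by
      intro t ht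
      obtain ⟨s, hsE, rfl⟩ := Finset.mem_image.mp ht
      have h1 : s ∈ S := Finset.mem_of_mem_erase hsE
      have h2 : s ≠ s0 := Finset.ne_of_mem_erase hsE
      have h3 := S.min'_le s h1
      rw [← hs0] at h3
      omega
    have hprodT : (∏ t ∈ T, t) = ∏ s ∈ E, (s - s0) := Finset.prod_image hinj
    have hdvdT : (∏ t ∈ T, t) ∣ (n.factorial : ℤ) := by
      refine dvd_trans ⟨(-1 : ℤ)^n, ?_⟩ hdvdfac
      rw [hprodT, hD]
      calc (∏ s ∈ E, (s0 - s)) = ∏ s ∈ E, ((-1) * (s - s0)) :=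
            Finset.prod_congr rfl (fun s _ => by ring)
        _ = (∏ _s ∈ E, (-1 : ℤ)) * ∏ s ∈ E, (s - s0) := Finset.prod_mul_distrib
        _ = (∏ s ∈ E, (s - s0)) * (-1)^n := by rw [Finset.prod_const, hcardE]; ring
    obtain ⟨hle, heqc⟩ := prod_factorial_aux n T hcardT hposT
    have hfacpos : (0:ℤ) < (n.factorial : ℤ) := by positivity
    have hlefac : (∏ t ∈ T, t) ≤ (n.factorial : ℤ) := Int.le_of_dvd hfacpos hdvdT
    have hTeq := heqc (le_antisymm hlefac hle)
    refine ⟨s0, ?_⟩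
    ext x
    simp only [Finset.mem_Icc]
    constructor
    · intro hx
      have h1 : s0 ≤ x := by
        have := S.min'_le x hx; rw [← hs0] at this; exact this
      refine ⟨h1, ?_⟩
      by_cases hxs : x = s0
      · omega
      · have hxE : x ∈ E := Finset.mem_erase.mpr ⟨hxs, hx⟩
        have : x - s0 ∈ T := Finset.mem_image_of_mem _ hxE
        rw [hTeq, Finset.mem_Icc] at this
        omega
    · intro hx
      by_cases hxs : x = s0
      · rw [hxs]; exact hs0S
      · have hmem : x - s0 ∈ Finset.Icc (1:ℤ) (n:ℤ) := by
          simp only [Finset.mem_Icc]; omega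
        rw [← hTeq] at hmem
        obtain ⟨s, hsE, hss⟩ := Finset.mem_image.mp hmem
        have hsx : s = x := by omega
        rw [← hsx]
        exact Finset.mem_of_mem_erase hsE
  · rintro ⟨a, rfl⟩ P hdegP
    constructor
    · intro hall s _
      exact hall s
    · intro hvals x
      have hv : ∀ k ∈ Finset.Icc a (a + (n : ℤ)), ∃ b : ℤ, P.eval (k : ℚ) = (b : ℚ) := by
        intro k hk
        obtain ⟨b, hb⟩ := hvals k hk
        rw [halg, halg] at hb
        exact ⟨b, hb⟩
      obtain ⟨b, hb⟩ := intval n P a hdegP hv x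
      exact ⟨b, by rw [halg, halg]; exact hb⟩
end

section
/- Let A be a discrete valuation ring with maximal ideal 𝔪 and let S be a finite subset of A. Then S is n-universal if and only if S contains a subset with n+1 elements which is almost uniformly distributed modulo 𝔪^k for every positive integer k. -/
/-!
Fix a uniformizer `π`. For a set `T` of `n + 1` nodes, Lagrange interpolation shows that any
`S ⊇ T` is `n`-universal once every basis polynomial `∏ j ∈ T.erase t, (X - j) / (t - j)` maps `A`
into `A`. Conversely, if `S` is `n`-universal, an `(n + 1)`-subset minimising the valuation of
`∏_{t ≠ j} (t - j)` has this property: exchanging a node for another point of `S` shows that its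
basis polynomials are integral on `S`, hence on `A`.

The valuation of `∏ j ∈ W, (a - j)` is `∑_{l ≥ 1} #{j ∈ W | j ≡ a mod π ^ l}`, so integrality of
the basis is a comparison of class counts level by level. Almost uniform distribution gives it
directly. Conversely, if a class modulo `π ^ (k + 1)` holds two elements more than a sibling class,
descending through fuller and emptier subclasses produces a node `t` and a point `a` at which the
basis polynomial of `t` is not integral; and once sibling classes are balanced at every level,
counting children shows that all classes of a level are.
-/

open scoped Classical

/-- A finite subset `S` of a commutative ring `A` is almost uniformly distributed
modulo an ideal `I` if for all `a, b ∈ A` the difference of the numbers of elements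
of `S` congruent to `a` resp. `b` modulo `I` lies in `{-1, 0, 1}`. -/
def IsAUD {A : Type*} [CommRing A] (I : Ideal A) (S : Finset A) : Prop :=
  ∀ a b : A,
    ((S.filter fun s => s - a ∈ I).card : ℤ) - ((S.filter fun s => s - b ∈ I).card : ℤ) ∈
      ({-1, 0, 1} : Set ℤ)

open Finset Polynomial

theorem le_add_one_of_sum_le_sum_add_one {ι : Type*} {s : Finset ι} {f g : ι → ℕ}
    (hf : ∀ i ∈ s, ∀ j ∈ s, f i ≤ f j + 1) (hg : ∀ i ∈ s, ∀ j ∈ s, g i ≤ g j + 1)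
    (hfg : ∑ i ∈ s, f i ≤ ∑ i ∈ s, g i + 1) {i : ι} (hi : i ∈ s) : f i ≤ g i + 1 := by
  by_contra! h
  have hf' : #(s.erase i) • (g i + 1) ≤ ∑ j ∈ s.erase i, f j :=
    card_nsmul_le_sum _ _ _ fun j hj => by have := hf i hi j (mem_of_mem_erase hj); omega
  have hg' : ∑ j ∈ s.erase i, g j ≤ #(s.erase i) • (g i + 1) :=
    sum_le_card_nsmul _ _ _ fun j hj => hg j (mem_of_mem_erase hj) i hi
  rw [← add_sum_erase s f hi, ← add_sum_erase s g hi] at hfg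
  omega

theorem emultiplicity_eq_card_pow_dvd {α : Type*} [Monoid α] {a b : α} {M : ℕ}
    (hM : emultiplicity a b ≤ M) : emultiplicity a b = #{l ∈ Icc 1 M | a ^ l ∣ b} := by
  obtain ⟨n, hn⟩ := ENat.ne_top_iff_exists.1 (ne_top_of_le_ne_top (ENat.natCast_ne_top M) hM)
  have hnM : n ≤ M := by exact_mod_cast hn ▸ hM
  have : {l ∈ Icc 1 M | a ^ l ∣ b} = Icc 1 n := by
    ext l
    simp only [mem_filter, mem_Icc, pow_dvd_iff_le_emultiplicity, ← hn, Nat.cast_le]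
    omega
  rw [this, Nat.card_Icc, ← hn]
  simp

section Classes

variable {A : Type*} [CommRing A] (π : A) (T : Finset A)

noncomputable def classCount (k : ℕ) (a : A) : ℕ :=
  (T.filter fun t => π ^ k ∣ t - a).card

def IsBalancedAt (k : ℕ) : Prop :=
  ∀ a b : A, classCount π T k a ≤ classCount π T k b + 1

/-- Representatives of the classes modulo `π ^ (l + 1)` inside the class of `x` modulo `π ^ l`,
indexed by the residues modulo `π`. -/
noncomputable def child (l : ℕ) (x : A) (r : A ⧸ Ideal.span {π}) : A :=
  x + π ^ l * r.out

variable {π T}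

theorem classCount_congr {k : ℕ} {a b : A} (h : π ^ k ∣ a - b) :
    classCount π T k a = classCount π T k b := by
  unfold classCount
  congr 1
  refine filter_congr fun t _ => ?_
  rw [show t - b = t - a + (a - b) by ring, dvd_add_left h]

theorem classCount_anti {k l : ℕ} (hkl : k ≤ l) (a : A) :
    classCount π T l a ≤ classCount π T k a :=
  card_le_card <| monotone_filter_right _ fun _ _ h => (pow_dvd_pow π hkl).trans h

theorem one_le_classCount_self {k : ℕ} {t : A} (ht : t ∈ T) : 1 ≤ classCount π T k t :=
  card_pos.2 ⟨t, mem_filter.2 ⟨ht, by simp⟩⟩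

theorem classCount_erase_self {k : ℕ} {t : A} (ht : t ∈ T) :
    classCount π (T.erase t) k t = classCount π T k t - 1 := by
  rw [classCount, filter_erase, card_erase_of_mem (mem_filter.2 ⟨ht, by simp⟩)]
  rfl

theorem classCount_erase_of_not_dvd {k : ℕ} {t a : A} (h : ¬π ^ k ∣ t - a) :
    classCount π (T.erase t) k a = classCount π T k a := by
  have ht : t ∉ T.filter fun s => π ^ k ∣ s - a := fun ht => h (mem_filter.1 ht).2
  rw [classCount, filter_erase, erase_eq_of_notMem ht]
  rfl

variable (π T) in
theorem isBalancedAt_zero : IsBalancedAt π T 0 := by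
  simp [IsBalancedAt, classCount]

theorem pow_dvd_child_sub (l : ℕ) (x : A) (r : A ⧸ Ideal.span {π}) :
    π ^ l ∣ child π l x r - x :=
  ⟨r.out, by rw [child, add_sub_cancel_left]⟩

theorem pow_dvd_sub_of_pow_succ_dvd_sub_child {l : ℕ} {x y : A} {r : A ⧸ Ideal.span {π}}
    (h : π ^ (l + 1) ∣ y - child π l x r) : π ^ l ∣ y - x := by
  rw [show y - x = y - child π l x r + (child π l x r - x) by ring]
  exact dvd_add ((pow_dvd_pow π l.le_succ).trans h) (pow_dvd_child_sub l x r)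

theorem pow_succ_dvd_child_zero_sub (l : ℕ) (x : A) : π ^ (l + 1) ∣ child π l x 0 - x := by
  obtain ⟨c, hc⟩ := Ideal.mem_span_singleton'.1 <|
    Ideal.Quotient.eq_zero_iff_mem.1 (Ideal.Quotient.mk_out (0 : A ⧸ Ideal.span {π}))
  exact ⟨c, by rw [child, add_sub_cancel_left, ← hc, pow_succ]; ring⟩

theorem exists_pow_succ_dvd_sub_child {l : ℕ} {x y : A} (h : π ^ l ∣ y - x) :
    ∃ r, π ^ (l + 1) ∣ y - child π l x r := by
  obtain ⟨c, hc⟩ := h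
  have hr : π ∣ c - (Ideal.Quotient.mk (Ideal.span {π}) c).out :=
    Ideal.mem_span_singleton.1 <| Ideal.Quotient.eq.1 (Ideal.Quotient.mk_out _).symm
  refine ⟨Ideal.Quotient.mk _ c, ?_⟩
  rw [show y - child π l x _ = π ^ l * (c - (Ideal.Quotient.mk (Ideal.span {π}) c).out) by
    rw [child, ← sub_sub, hc]; ring, pow_succ]
  exact mul_dvd_mul_left _ hr

variable [IsDomain A]

theorem eq_of_pow_succ_dvd_sub_child (hπ : π ≠ 0) {l : ℕ} {x y : A}
    {r r' : A ⧸ Ideal.span {π}} (h : π ^ (l + 1) ∣ y - child π l x r)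
    (h' : π ^ (l + 1) ∣ y - child π l x r') : r = r' := by
  have hd := dvd_sub h h'
  rw [show y - child π l x r - (y - child π l x r') = π ^ l * (r'.out - r.out) by
    rw [child, child]; ring, pow_succ, mul_dvd_mul_iff_left (pow_ne_zero l hπ)] at hd
  rw [← Ideal.Quotient.mk_out r, ← Ideal.Quotient.mk_out r']
  exact (Ideal.Quotient.eq.2 (Ideal.mem_span_singleton.2 hd)).symm

theorem classCount_eq_sum_child (hπ : π ≠ 0) {l : ℕ} {x : A} (R : Finset (A ⧸ Ideal.span {π}))
    (hR : ∀ t ∈ T, π ^ l ∣ t - x → ∃ r ∈ R, π ^ (l + 1) ∣ t - child π l x r) :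
    classCount π T l x = ∑ r ∈ R, classCount π T (l + 1) (child π l x r) := by
  have hdisj : (R : Set _).PairwiseDisjoint
      fun r => T.filter fun t => π ^ (l + 1) ∣ t - child π l x r :=
    fun r _ r' _ hrr' => disjoint_filter.2 fun t _ h h' =>
      hrr' (eq_of_pow_succ_dvd_sub_child hπ h h')
  unfold classCount
  rw [← card_biUnion hdisj]
  congr 1
  ext t
  simp only [mem_filter, mem_biUnion]
  refine ⟨fun ⟨ht, htx⟩ => ?_, fun ⟨r, _, ht, htr⟩ =>
    ⟨ht, pow_dvd_sub_of_pow_succ_dvd_sub_child htr⟩⟩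
  obtain ⟨r, hr, htr⟩ := hR t ht htx
  exact ⟨r, hr, ht, htr⟩

variable (T) in
theorem exists_classCount_eq_sum_child (hπ : π ≠ 0) (l : ℕ) (x y : A) :
    ∃ R : Finset (A ⧸ Ideal.span {π}), 0 ∈ R ∧
      classCount π T l x = ∑ r ∈ R, classCount π T (l + 1) (child π l x r) ∧
      classCount π T l y = ∑ r ∈ R, classCount π T (l + 1) (child π l y r) := by
  choose! f hf using fun t (h : π ^ l ∣ t - x) => exists_pow_succ_dvd_sub_child h
  choose! g hg using fun t (h : π ^ l ∣ t - y) => exists_pow_succ_dvd_sub_child h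
  refine ⟨insert 0 (T.image f ∪ T.image g), mem_insert_self _ _,
    classCount_eq_sum_child hπ _ fun t ht h => ⟨f t, ?_, hf t h⟩,
    classCount_eq_sum_child hπ _ fun t ht h => ⟨g t, ?_, hg t h⟩⟩
  · exact mem_insert_of_mem (mem_union_left _ (mem_image_of_mem f ht))
  · exact mem_insert_of_mem (mem_union_right _ (mem_image_of_mem g ht))

theorem IsBalancedAt.succ (hπ : π ≠ 0) {l : ℕ} (hbal : IsBalancedAt π T l)
    (hsib : ∀ x y, π ^ l ∣ x - y → classCount π T (l + 1) x ≤ classCount π T (l + 1) y + 1) :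
    IsBalancedAt π T (l + 1) := by
  intro x y
  obtain ⟨R, h0, hx, hy⟩ := exists_classCount_eq_sum_child T hπ l x y
  have hsib' : ∀ z, ∀ r ∈ R, ∀ r' ∈ R,
      classCount π T (l + 1) (child π l z r) ≤ classCount π T (l + 1) (child π l z r') + 1 :=
    fun z r _ r' _ => hsib _ _ <| by
      simpa using dvd_sub (pow_dvd_child_sub l z r) (pow_dvd_child_sub l z r')
  have := le_add_one_of_sum_le_sum_add_one (hsib' x) (hsib' y) (hx ▸ hy ▸ hbal x y) h0
  rwa [classCount_congr (pow_succ_dvd_child_zero_sub l x),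
    classCount_congr (pow_succ_dvd_child_zero_sub l y)] at this

theorem exists_classCount_child_lt (hπ : π ≠ 0) {l : ℕ} {x y : A}
    (h : classCount π T l y < classCount π T l x) :
    ∃ r, classCount π T (l + 1) (child π l y r) < classCount π T (l + 1) (child π l x r) := by
  obtain ⟨R, -, hx, hy⟩ := exists_classCount_eq_sum_child T hπ l x y
  rw [hx, hy] at h
  obtain ⟨r, -, hr⟩ := exists_lt_of_sum_lt h
  exact ⟨r, hr⟩

end Classes

section PairDiffProd

variable {A : Type*} [CommRing A]

/-- Up to sign, the discriminant of `∏ t ∈ T, (X - t)`. -/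
noncomputable def pairDiffProd (T : Finset A) : A :=
  ∏ t ∈ T, ∏ j ∈ T.erase t, (t - j)

theorem pairDiffProd_insert {u : A} {W : Finset A} (hu : u ∉ W) :
    pairDiffProd (insert u W) = (-1) ^ W.card * (∏ j ∈ W, (u - j)) ^ 2 * pairDiffProd W := by
  have hW : ∀ t ∈ W, ∏ j ∈ (insert u W).erase t, (t - j) = -(u - t) * ∏ j ∈ W.erase t, (t - j) :=
    fun t ht => by
      rw [erase_insert_of_ne (ne_of_mem_of_not_mem ht hu).symm,
        prod_insert fun h => hu (mem_of_mem_erase h), neg_sub]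
  rw [pairDiffProd, prod_insert hu, erase_insert hu, prod_congr rfl hW, prod_mul_distrib,
    prod_neg, pairDiffProd]
  ring

variable [IsDomain A]

theorem prod_sub_ne_zero {W : Finset A} {a : A} (ha : a ∉ W) : ∏ j ∈ W, (a - j) ≠ 0 :=
  prod_ne_zero_iff.2 fun _ hj => sub_ne_zero.2 (ne_of_mem_of_not_mem hj ha).symm

theorem pairDiffProd_ne_zero (T : Finset A) : pairDiffProd T ≠ 0 :=
  prod_ne_zero_iff.2 fun t _ => prod_sub_ne_zero (notMem_erase t T)

theorem prod_sub_dvd_of_pairDiffProd_insert_dvd [IsIntegrallyClosed A] {W : Finset A} {t s : A}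
    (ht : t ∉ W) (hs : s ∉ W) (h : pairDiffProd (insert t W) ∣ pairDiffProd (insert s W)) :
    ∏ j ∈ W, (t - j) ∣ ∏ j ∈ W, (s - j) := by
  rwa [pairDiffProd_insert ht, pairDiffProd_insert hs,
    mul_dvd_mul_iff_right (pairDiffProd_ne_zero W),
    mul_dvd_mul_iff_left (pow_ne_zero _ (neg_ne_zero.2 one_ne_zero)),
    IsIntegrallyClosed.pow_dvd_pow_iff two_ne_zero] at h

theorem exists_subset_card_eq_forall_pairDiffProd_dvd [IsDiscreteValuationRing A]
    {S : Finset A} {m : ℕ} (hm : m ≤ S.card) :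
    ∃ T ⊆ S, T.card = m ∧ ∀ T' ⊆ S, T'.card = m → pairDiffProd T ∣ pairDiffProd T' := by
  obtain ⟨T, hT, hmin⟩ := exists_min_image (S.powersetCard m)
    (fun T => IsDiscreteValuationRing.addVal A (pairDiffProd T)) (powersetCard_nonempty.2 hm)
  rw [mem_powersetCard] at hT
  exact ⟨T, hT.1, hT.2, fun T' h h' => IsDiscreteValuationRing.addVal_le_iff_dvd.1 <|
    hmin T' (mem_powersetCard.2 ⟨h, h'⟩)⟩

end PairDiffProd

section Valuation

variable {A : Type*} [CommRing A] [IsDomain A] {π : A}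

theorem exists_classCount_le_one [WfDvdMonoid A] (hπ : Prime π) (T : Finset A) :
    ∃ L, ∀ z, classCount π T L z ≤ 1 := by
  have hfin := FiniteMultiplicity.of_prime_left hπ (pairDiffProd_ne_zero T)
  refine ⟨multiplicity π (pairDiffProd T) + 1, fun z => ?_⟩
  by_contra! h
  obtain ⟨t, ht, t', ht', hne⟩ := one_lt_card.1 h
  rw [mem_filter] at ht ht'
  refine hfin.not_pow_dvd_of_multiplicity_lt (lt_add_one _) ?_
  have hdvd : t - t' ∣ pairDiffProd T :=
    (dvd_prod_of_mem _ (mem_erase.2 ⟨hne.symm, ht'.1⟩)).trans (dvd_prod_of_mem _ ht.1)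
  have hπtt' : π ^ (multiplicity π (pairDiffProd T) + 1) ∣ t - t' := by
    simpa using dvd_sub ht.2 ht'.2
  exact hπtt'.trans hdvd

/-- Follow a fuller child of the class of `x` and the corresponding emptier child of the class
of `y`, down to a level where the class of `y` is empty; this terminates because the classes of
`T` are eventually singletons. -/
theorem exists_mem_notMem_forall_classCount_lt [WfDvdMonoid A] (hπ : Prime π) (T : Finset A)
    {l : ℕ} {x y : A} (h : classCount π T l y < classCount π T l x) :
    ∃ t ∈ T, ∃ a ∉ T, π ^ l ∣ t - x ∧ π ^ l ∣ a - y ∧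
      ∀ m, l ≤ m → classCount π T m a < classCount π T m t := by
  have base : ∀ {l x y}, classCount π T l y = 0 → classCount π T l y < classCount π T l x →
      ∃ t ∈ T, ∃ a ∉ T, π ^ l ∣ t - x ∧ π ^ l ∣ a - y ∧
        ∀ m, l ≤ m → classCount π T m a < classCount π T m t := by
    intro l x y hy hxy
    obtain ⟨t, ht⟩ := card_pos.1 (hy ▸ hxy)
    rw [mem_filter] at ht
    refine ⟨t, ht.1, y, fun hy' => ?_, ht.2, by simp, fun m hm => ?_⟩
    · have := one_le_classCount_self (π := π) (k := l) hy'
      omega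
    · have := classCount_anti (π := π) (T := T) hm y
      have := one_le_classCount_self (π := π) (k := m) ht.1
      omega
  obtain ⟨L, hL⟩ := exists_classCount_le_one hπ T
  suffices key : ∀ d l x y, L ≤ l + d → classCount π T l y < classCount π T l x →
      ∃ t ∈ T, ∃ a ∉ T, π ^ l ∣ t - x ∧ π ^ l ∣ a - y ∧
        ∀ m, l ≤ m → classCount π T m a < classCount π T m t from
    key L l x y (Nat.le_add_left L l) h
  intro d
  induction d with
  | zero =>
    intro l x y hl hxy
    have := (classCount_anti (show L ≤ l by omega) x).trans (hL x)
    exact base (by omega) hxy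
  | succ d ih =>
    intro l x y hl hxy
    by_cases hy : classCount π T l y = 0
    · exact base hy hxy
    obtain ⟨r, hr⟩ := exists_classCount_child_lt hπ.ne_zero hxy
    obtain ⟨t, ht, a, ha, htx, hay, hlt⟩ := ih (l + 1) _ _ (by omega) hr
    have htx' := pow_dvd_sub_of_pow_succ_dvd_sub_child htx
    have hay' := pow_dvd_sub_of_pow_succ_dvd_sub_child hay
    refine ⟨t, ht, a, ha, htx', hay', fun m hm => ?_⟩
    rcases hm.eq_or_lt with rfl | hm
    · rwa [classCount_congr htx', classCount_congr hay']
    · exact hlt m hm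

theorem emultiplicity_prod_sub_eq_sum_classCount (hπ : Prime π) (W : Finset A) (a : A) {M : ℕ}
    (hM : emultiplicity π (∏ j ∈ W, (a - j)) ≤ M) :
    emultiplicity π (∏ j ∈ W, (a - j)) = ∑ l ∈ Icc 1 M, classCount π W l a := by
  rw [Finset.emultiplicity_prod hπ] at hM ⊢
  have hj : ∀ j ∈ W, emultiplicity π (a - j) = #{l ∈ Icc 1 M | π ^ l ∣ a - j} := fun j hj =>
    emultiplicity_eq_card_pow_dvd <|
      (single_le_sum (f := fun j => emultiplicity π (a - j)) (fun _ _ => zero_le) hj).trans hM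
  rw [sum_congr rfl hj]
  norm_cast
  simp only [classCount, card_filter]
  rw [sum_comm]
  exact sum_congr rfl fun l _ => sum_congr rfl fun j _ => by rw [← neg_sub, dvd_neg]

theorem exists_emultiplicity_prod_sub_eq_sum [WfDvdMonoid A] (hπ : Prime π) {W : Finset A}
    {b c : A} (hb : b ∉ W) (hc : c ∉ W) (k : ℕ) :
    ∃ M, k ≤ M ∧
      emultiplicity π (∏ j ∈ W, (b - j)) = ∑ l ∈ Icc 1 M, classCount π W l b ∧
      emultiplicity π (∏ j ∈ W, (c - j)) = ∑ l ∈ Icc 1 M, classCount π W l c := by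
  have hb' :=
    (FiniteMultiplicity.of_prime_left hπ (prod_sub_ne_zero hb)).emultiplicity_eq_multiplicity
  have hc' :=
    (FiniteMultiplicity.of_prime_left hπ (prod_sub_ne_zero hc)).emultiplicity_eq_multiplicity
  refine ⟨multiplicity π (∏ j ∈ W, (b - j)) + multiplicity π (∏ j ∈ W, (c - j)) + k,
    by omega, emultiplicity_prod_sub_eq_sum_classCount hπ W b ?_,
    emultiplicity_prod_sub_eq_sum_classCount hπ W c ?_⟩
  · rw [hb']; exact_mod_cast by omega
  · rw [hc']; exact_mod_cast by omega

theorem dvd_of_emultiplicity_le [IsDiscreteValuationRing A] (hπ : Irreducible π) {x y : A}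
    (h : emultiplicity π x ≤ emultiplicity π y) : x ∣ y := by
  have hval : ∀ z : A, IsDiscreteValuationRing.addVal A z = emultiplicity π z := fun z => by
    rw [IsDiscreteValuationRing.addVal, multiplicity_addValuation_apply]
    exact emultiplicity_eq_of_associated_left (IsDiscreteValuationRing.associated_of_irreducible A
      hπ (Classical.choose_spec (IsDiscreteValuationRing.exists_prime A)).irreducible)
  rwa [← IsDiscreteValuationRing.addVal_le_iff_dvd, hval, hval]

theorem isAUD_pow_maximalIdeal_iff [IsDiscreteValuationRing A] (hπ : Irreducible π)
    (T : Finset A) (k : ℕ) :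
    IsAUD (IsLocalRing.maximalIdeal A ^ k) T ↔ IsBalancedAt π T k := by
  have hmem : ∀ y : A, y ∈ IsLocalRing.maximalIdeal A ^ k ↔ π ^ k ∣ y := fun y => by
    rw [hπ.maximalIdeal_eq, Ideal.span_singleton_pow, Ideal.mem_span_singleton]
  simp only [IsAUD, IsBalancedAt, classCount, hmem, Set.mem_insert_iff, Set.mem_singleton_iff]
  exact ⟨fun h a b => by have := h a b; omega,
    fun h a b => by have := h a b; have := h b a; omega⟩

end Valuation

section Lagrange

variable {A : Type*} [CommRing A]

/-- The Lagrange basis polynomial `∏ j ∈ T.erase t, (X - j) / (t - j)` of every node `t ∈ T` maps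
`A` into `A`. -/
def HasIntegralLagrangeBasis (T : Finset A) : Prop :=
  ∀ t ∈ T, ∀ a : A, ∏ j ∈ T.erase t, (t - j) ∣ ∏ j ∈ T.erase t, (a - j)

variable [IsDomain A] {π : A}

/-- If two sibling classes differed by two, the pair `t, a` of
`exists_mem_notMem_forall_classCount_lt` would make the basis polynomial of `t` non-integral
at `a`. -/
theorem HasIntegralLagrangeBasis.classCount_succ_le [WfDvdMonoid A] (hπ : Prime π)
    {T : Finset A} (hT : HasIntegralLagrangeBasis T) {k : ℕ} {x y : A} (hxy : π ^ k ∣ x - y) :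
    classCount π T (k + 1) x ≤ classCount π T (k + 1) y + 1 := by
  by_contra! hlt
  obtain ⟨t, ht, a, ha, htx, hay, hcount⟩ := exists_mem_notMem_forall_classCount_lt hπ T
    (show classCount π T (k + 1) y < classCount π T (k + 1) x by omega)
  have hta : π ^ k ∣ t - a := by
    rw [show t - a = t - x + (x - y) - (a - y) by ring]
    exact dvd_sub (dvd_add ((pow_dvd_pow π k.le_succ).trans htx) hxy)
      ((pow_dvd_pow π k.le_succ).trans hay)
  have hta' : ¬π ^ (k + 1) ∣ t - a := fun h => by
    have := classCount_congr (T := T) htx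
    have := classCount_congr (T := T) h
    have := classCount_congr (T := T) hay
    omega
  have hle : ∀ l, 1 ≤ l → classCount π (T.erase t) l a ≤ classCount π (T.erase t) l t := by
    intro l _
    by_cases hdvd : π ^ l ∣ t - a
    · exact (classCount_congr (by rwa [← neg_sub, dvd_neg])).le
    · have hkl : k + 1 ≤ l := by
        by_contra
        exact hdvd ((pow_dvd_pow π (by omega)).trans hta)
      rw [classCount_erase_of_not_dvd hdvd, classCount_erase_self ht]
      have := hcount l hkl
      omega
  have hk : classCount π (T.erase t) (k + 1) a < classCount π (T.erase t) (k + 1) t := by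
    rw [classCount_erase_of_not_dvd hta', classCount_erase_self ht, classCount_congr htx,
      classCount_congr hay]
    omega
  obtain ⟨M, hM, hsa, hst⟩ := exists_emultiplicity_prod_sub_eq_sum hπ
    (fun h => ha (mem_of_mem_erase h)) (notMem_erase t T) (k + 1)
  have hdvd := emultiplicity_le_emultiplicity_of_dvd_right (a := π) (hT t ht a)
  rw [hsa, hst, Nat.cast_le] at hdvd
  exact (sum_lt_sum (fun l hl => hle l (mem_Icc.1 hl).1) ⟨k + 1, mem_Icc.2 ⟨by omega, hM⟩, hk⟩
    ).not_ge hdvd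

theorem HasIntegralLagrangeBasis.isBalancedAt [WfDvdMonoid A] (hπ : Prime π) {T : Finset A}
    (hT : HasIntegralLagrangeBasis T) : ∀ k, IsBalancedAt π T k
  | 0 => isBalancedAt_zero π T
  | k + 1 => (hT.isBalancedAt hπ k).succ hπ.ne_zero fun _ _ h => hT.classCount_succ_le hπ h

theorem hasIntegralLagrangeBasis_of_isBalancedAt [IsDiscreteValuationRing A] (hπ : Irreducible π)
    {T : Finset A} (h : ∀ k, IsBalancedAt π T k) : HasIntegralLagrangeBasis T := by
  intro t ht a
  by_cases ha : a ∈ T.erase t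
  · rw [prod_eq_zero ha (sub_self a)]
    exact dvd_zero _
  obtain ⟨M, -, hst, hsa⟩ := exists_emultiplicity_prod_sub_eq_sum hπ.prime (notMem_erase t T) ha 0
  refine dvd_of_emultiplicity_le hπ ?_
  rw [hst, hsa, Nat.cast_le]
  refine sum_le_sum fun l _ => ?_
  by_cases hdvd : π ^ l ∣ t - a
  · exact (classCount_congr hdvd).le
  · rw [classCount_erase_self ht, classCount_erase_of_not_dvd hdvd]
    have := h l t a
    omega

end Lagrange

section Universal

variable {A K : Type*} [CommRing A] [Field K] [Algebra A K]

theorem eval_lagrangeBasis (T : Finset A) (t a : A) :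
    (Lagrange.basis T (algebraMap A K) t).eval (algebraMap A K a) =
      (algebraMap A K (∏ j ∈ T.erase t, (t - j)))⁻¹ *
        algebraMap A K (∏ j ∈ T.erase t, (a - j)) := by
  simp only [Lagrange.basis, Lagrange.basisDivisor, eval_prod, eval_mul, eval_C, eval_sub,
    eval_X, map_prod, map_sub, prod_mul_distrib, prod_inv_distrib]

variable [IsFractionRing A K]

theorem exists_inv_mul_eq_algebraMap_iff_dvd {c x : A} (hc : c ≠ 0) :
    (∃ b : A, (algebraMap A K c)⁻¹ * algebraMap A K x = algebraMap A K b) ↔ c ∣ x := by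
  have hc' : algebraMap A K c ≠ 0 := (map_ne_zero_iff _ (IsFractionRing.injective A K)).2 hc
  constructor
  · rintro ⟨b, hb⟩
    refine ⟨b, IsFractionRing.injective A K ?_⟩
    rw [map_mul, ← hb, mul_inv_cancel_left₀ hc']
  · rintro ⟨b, rfl⟩
    exact ⟨b, by rw [map_mul, inv_mul_cancel_left₀ hc']⟩

variable [IsDomain A]

theorem HasIntegralLagrangeBasis.isNUniversal {n : ℕ} {S T : Finset A}
    (hT : HasIntegralLagrangeBasis T) (hTS : T ⊆ S) (hcard : T.card = n + 1) :
    IsNUniversal A K n S := by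
  intro P hP
  refine ⟨fun h s _ => h s, fun hS a => ?_⟩
  choose! b hb using fun t (ht : t ∈ T) => hS t (hTS ht)
  choose! q hq using fun t (ht : t ∈ T) =>
    (exists_inv_mul_eq_algebraMap_iff_dvd (K := K) (prod_sub_ne_zero (notMem_erase t T))).2
      (hT t ht a)
  have hdeg : P.degree < T.card := by
    rw [hcard]
    exact degree_le_natDegree.trans_lt (by exact_mod_cast Nat.lt_succ_of_le hP)
  refine ⟨∑ t ∈ T, b t * q t, ?_⟩
  rw [Lagrange.eq_interpolate (IsFractionRing.injective A K).injOn hdeg,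
    Lagrange.interpolate_apply, eval_finsetSum, map_sum]
  refine sum_congr rfl fun t ht => ?_
  rw [eval_mul, eval_C, hb t ht, eval_lagrangeBasis, hq t ht, map_mul]

theorem IsNUniversal.dvd_prod_sub {n : ℕ} {S : Finset A} (hu : IsNUniversal A K n S)
    {W : Finset A} (hW : W.card ≤ n) {c : A} (hc : c ≠ 0)
    (hS : ∀ s ∈ S, c ∣ ∏ j ∈ W, (s - j)) (a : A) : c ∣ ∏ j ∈ W, (a - j) := by
  have hP : (C (algebraMap A K c)⁻¹ * ∏ j ∈ W, (X - C (algebraMap A K j))).natDegree ≤ n := by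
    refine (natDegree_C_mul_le _ _).trans ?_
    rw [natDegree_prod_of_monic _ _ fun j _ => monic_X_sub_C _]
    simpa using hW
  have key := (hu _ hP).2
  simp only [eval_mul, eval_C, eval_prod, eval_sub, eval_X, ← map_sub, ← map_prod,
    exists_inv_mul_eq_algebraMap_iff_dvd hc] at key
  exact key hS a

theorem IsNUniversal.lt_card {n : ℕ} {S : Finset A} (hu : IsNUniversal A K n S) {π : A}
    (hπ0 : π ≠ 0) (hπ : ¬IsUnit π) : n < S.card := by
  by_contra! hS
  have : Infinite A := Infinite.of_injective _ (pow_injective_of_not_isUnit hπ hπ0)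
  obtain ⟨x, hx⟩ := Infinite.exists_notMem_finset S
  have hd := prod_sub_ne_zero hx
  have h := hu.dvd_prod_sub hS (mul_ne_zero hπ0 hd) (fun s hs => by
    rw [prod_eq_zero hs (sub_self s)]
    exact dvd_zero _) x
  exact hπ (isUnit_of_dvd_one ((mul_dvd_mul_iff_right hd).1 (by rwa [one_mul])))

/-- Exchanging `t` for `s ∈ S \ T` multiplies `pairDiffProd T` by the square of the value at `s`
of the basis polynomial of `t`, so minimality makes these values integral. -/
theorem IsNUniversal.hasIntegralLagrangeBasis [IsIntegrallyClosed A] {n : ℕ} {S T : Finset A}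
    (hu : IsNUniversal A K n S) (hTS : T ⊆ S) (hcard : T.card = n + 1)
    (hmin : ∀ T' ⊆ S, T'.card = n + 1 → pairDiffProd T ∣ pairDiffProd T') :
    HasIntegralLagrangeBasis T := by
  intro t ht
  refine hu.dvd_prod_sub (by rw [card_erase_of_mem ht, hcard]; rfl)
    (prod_sub_ne_zero (notMem_erase t T)) fun s hs => ?_
  by_cases hsT : s ∈ T
  · rcases eq_or_ne s t with rfl | hst
    · rfl
    · rw [prod_eq_zero (mem_erase.2 ⟨hst, hsT⟩) (sub_self s)]
      exact dvd_zero _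
  · have hsT' : s ∉ T.erase t := fun h => hsT (mem_of_mem_erase h)
    refine prod_sub_dvd_of_pairDiffProd_insert_dvd (notMem_erase t T) hsT' ?_
    rw [insert_erase ht]
    refine hmin _ (insert_subset hs ((erase_subset t T).trans hTS)) ?_
    rw [card_insert_of_notMem hsT', card_erase_of_mem ht, hcard]
    rfl

end Universal

/-- In a discrete valuation ring `A` with maximal ideal `𝔪`, a finite set `S` is
`n`-universal if and only if it contains a subset with `n + 1` elements which is almost
uniformly distributed modulo `𝔪 ^ k` for every positive integer `k`. -/
theorem stmt2 {A K : Type*} [CommRing A] [IsDomain A] [IsDiscreteValuationRing A] [Field K]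
    [Algebra A K] [IsFractionRing A K] (n : ℕ) (S : Finset A) :
    IsNUniversal A K n S ↔
      ∃ S' ⊆ S, S'.card = n + 1 ∧
        ∀ k : ℕ, 0 < k → IsAUD ((IsLocalRing.maximalIdeal A) ^ k) S' := by
  obtain ⟨π, hπ⟩ := IsDiscreteValuationRing.exists_irreducible A
  simp only [isAUD_pow_maximalIdeal_iff hπ]
  constructor
  · intro hu
    obtain ⟨T, hTS, hcard, hmin⟩ :=
      exists_subset_card_eq_forall_pairDiffProd_dvd (hu.lt_card hπ.ne_zero hπ.not_isUnit)
    exact ⟨T, hTS, hcard, fun k _ =>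
      (hu.hasIntegralLagrangeBasis hTS hcard hmin).isBalancedAt hπ.prime k⟩
  · rintro ⟨T, hTS, hcard, hbal⟩
    refine (hasIntegralLagrangeBasis_of_isBalancedAt hπ fun k => ?_).isNUniversal hTS hcard
    rcases k.eq_zero_or_pos with rfl | hk
    exacts [isBalancedAt_zero π T, hbal k hk]
end

section
/- Let A be an integral domain with field of fractions K, let S be a finite subset of A, and let X be a set of prime ideals of A such that the intersection (inside K) of the localizations A_𝔭 over all 𝔭 ∈ X equals A. Then S is n-universal in A if and only if for every 𝔭 ∈ X the set S is n-universal in the localization A_𝔭. -/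
/-- The localization `A_𝔭` of `A` at a prime ideal `𝔭`, viewed as a subset of the
fraction field `K`: the set of elements of the form `a / s` with `a ∈ A`, `s ∈ A`,
`s ∉ 𝔭`. -/
def locAt (A K : Type*) [CommRing A] [IsDomain A] [Field K] [Algebra A K]
    [IsFractionRing A K] (𝔭 : Ideal A) : Set K :=
  {x : K | ∃ a s : A, s ∉ 𝔭 ∧ x = algebraMap A K a / algebraMap A K s}

/-- A finite subset `S` of a subring (given as a subset `R ⊆ K` closed under the
relevant operations) is `n`-universal in `R` if for every polynomial `P ∈ K[X]` of
degree at most `n`, `P` maps `R` into `R` if and only if `P` maps `S` into `R`. -/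
def IsNUniversalIn {A K : Type*} [CommRing A] [IsDomain A] [Field K] [Algebra A K]
    [IsFractionRing A K] (R : Set K) (n : ℕ) (S : Finset A) : Prop :=
  ∀ P : Polynomial K, P.natDegree ≤ n →
    ((∀ x ∈ R, Polynomial.eval x P ∈ R) ↔
      ∀ s ∈ S, Polynomial.eval (algebraMap A K s) P ∈ R)

/-!
If `f ∈ K[X]` maps `A` into `A` and `s` is a denominator, then `g(Y) = f(sY) - s^d f(Y)` has
smaller degree and still maps `A` into `A`; since `f(a/s) = (f(a) - g(a/s)) / s^d`, induction on
the degree shows that `f` maps every localization `M⁻¹A ⊆ K` into itself. Hence, after clearing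
the finitely many denominators of `P(S)` in `A_𝔭`, universality in `A` gives universality in
`A_𝔭`. Conversely, local universality at every `𝔭 ∈ X` forces `P(A) ⊆ ⋂ A_𝔭 = A`.
-/

open Polynomial nonZeroDivisors Localization.subalgebra

lemma Polynomial.natDegree_comp_C_mul_X_sub_C_pow_mul_lt {R : Type*} [CommRing R] {f : R[X]}
    (hf : 0 < f.natDegree) (r : R) :
    (f.comp (C r * X) - C (r ^ f.natDegree) * f).natDegree < f.natDegree := by
  suffices (f.comp (C r * X) - C (r ^ f.natDegree) * f).natDegree ≤ f.natDegree - 1 by omega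
  refine natDegree_le_iff_coeff_eq_zero.mpr fun N hN => ?_
  rw [coeff_sub, comp_C_mul_X_coeff, coeff_C_mul]
  rcases (show f.natDegree ≤ N by omega).eq_or_lt with rfl | hlt
  · ring
  · rw [coeff_eq_zero_of_natDegree_lt hlt]
    ring

section

variable {A K : Type*} [CommRing A] [Field K] [Algebra A K] [IsFractionRing A K]

theorem Localization.subalgebra.mem_ofField_of_mem_range {M : Submonoid A} (hM : M ≤ A⁰)
    {x : K} (hx : x ∈ (algebraMap A K).range) : x ∈ ofField K M hM := by
  obtain ⟨c, rfl⟩ := hx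
  exact Subalgebra.algebraMap_mem _ c

variable [IsDomain A]

theorem Polynomial.eval_mem_ofField_of_eval_mem_range {M : Submonoid A} (hM : M ≤ A⁰)
    {f : K[X]} (hf : ∀ a : A, f.eval (algebraMap A K a) ∈ (algebraMap A K).range) {x : K}
    (hx : x ∈ ofField K M hM) : f.eval x ∈ ofField K M hM := by
  induction hD : f.natDegree using Nat.strong_induction_on generalizing f with
  | _ D ih =>
  rcases Nat.eq_zero_or_pos D with rfl | hD_pos
  · have hc := hf 0
    rw [eq_C_of_natDegree_eq_zero hD, eval_C] at hc ⊢
    exact mem_ofField_of_mem_range hM hc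
  obtain ⟨a, s, hs, rfl⟩ := hx
  have hs₀ : algebraMap A K s ≠ 0 := IsFractionRing.to_map_ne_zero_of_mem_nonZeroDivisors (hM hs)
  set g := f.comp (C (algebraMap A K s) * X) - C (algebraMap A K s ^ D) * f
  have hg_eval : ∀ y, g.eval y = f.eval (algebraMap A K s * y) - algebraMap A K s ^ D * f.eval y :=
    fun y => by simp [g]
  have hg_deg : g.natDegree < D := by
    simpa only [hD] using natDegree_comp_C_mul_X_sub_C_pow_mul_lt (f := f) (by omega) _
  have hg_range : ∀ b : A, g.eval (algebraMap A K b) ∈ (algebraMap A K).range := fun b => by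
    rw [hg_eval, ← map_mul]
    exact sub_mem (hf _) (mul_mem (pow_mem (RingHom.mem_range_self _ s) _) (hf b))
  have hf_eq : f.eval (algebraMap A K a * (algebraMap A K s)⁻¹) =
      (f.eval (algebraMap A K a) - g.eval (algebraMap A K a * (algebraMap A K s)⁻¹)) *
        (algebraMap A K 1 * (algebraMap A K (s ^ D))⁻¹) := by
    rw [hg_eval, mul_left_comm (algebraMap A K s), mul_inv_cancel₀ hs₀, mul_one, map_one, one_mul,
      map_pow, sub_sub_cancel]
    field_simp
  rw [hf_eq]
  refine mul_mem (sub_mem ?_ (ih _ hg_deg hg_range rfl)) ⟨1, s ^ D, pow_mem hs D, rfl⟩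
  exact mem_ofField_of_mem_range hM (hf a)

theorem Localization.subalgebra.exists_mul_mem_range_of_mem_ofField {M : Submonoid A}
    (hM : M ≤ A⁰) {ι : Type*} (s : Finset ι) {x : ι → K} (hx : ∀ i ∈ s, x i ∈ ofField K M hM) :
    ∃ t ∈ M, ∀ i ∈ s, algebraMap A K t * x i ∈ (algebraMap A K).range := by
  classical
  induction s using Finset.induction_on with
  | empty => exact ⟨1, M.one_mem, by simp⟩
  | insert j s hj ih =>
    obtain ⟨t, ht, hts⟩ := ih fun i hi => hx i (Finset.mem_insert_of_mem hi)
    obtain ⟨a, u, hu, hxj⟩ := hx j (Finset.mem_insert_self j s)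
    refine ⟨u * t, M.mul_mem hu ht, Finset.forall_mem_insert _ _ _ |>.mpr ⟨?_, fun i hi => ?_⟩⟩
    · refine ⟨t * a, ?_⟩
      rw [hxj, map_mul, map_mul]
      field_simp [IsFractionRing.to_map_ne_zero_of_mem_nonZeroDivisors (hM hu)]
    · rw [map_mul, mul_assoc]
      exact mul_mem (RingHom.mem_range_self _ u) (hts i hi)

theorem locAt_eq_ofField (𝔭 : Ideal A) [𝔭.IsPrime] :
    locAt A K 𝔭 = ofField K 𝔭.primeCompl 𝔭.primeCompl_le_nonZeroDivisors := by
  rw [ofField, Subalgebra.coe_copy]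
  ext x
  simp [locAt, div_eq_mul_inv]

theorem range_subset_locAt (𝔭 : Ideal A) [𝔭.IsPrime] :
    Set.range (algebraMap A K) ⊆ locAt A K 𝔭 := by
  rw [locAt_eq_ofField]
  exact fun x hx => mem_ofField_of_mem_range _ hx

theorem isNUniversal_iff_isNUniversalIn_range {n : ℕ} {S : Finset A} :
    IsNUniversal A K n S ↔ IsNUniversalIn (Set.range (algebraMap A K)) n S := by
  simp only [IsNUniversal, IsNUniversalIn, Set.mem_range, @eq_comm K (algebraMap A K _),
    forall_exists_index, forall_eq_apply_imp_iff]

theorem IsNUniversalIn.ofField {M : Submonoid A} (hM : M ≤ A⁰) {n : ℕ} {S : Finset A}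
    (h : IsNUniversalIn (Set.range (algebraMap A K)) n S) :
    IsNUniversalIn (ofField K M hM : Set K) n S := by
  intro P hP
  refine ⟨fun hP s _ => hP _ (Subalgebra.algebraMap_mem _ s), fun hS x hx => ?_⟩
  obtain ⟨t, ht, htS⟩ := exists_mul_mem_range_of_mem_ofField hM S hS
  have ht₀ : algebraMap A K t ≠ 0 := IsFractionRing.to_map_ne_zero_of_mem_nonZeroDivisors (hM ht)
  have hQ : ∀ y ∈ Set.range (algebraMap A K),
      (C (algebraMap A K t) * P).eval y ∈ Set.range (algebraMap A K) := by
    refine (h _ ((natDegree_C_mul_le _ _).trans hP)).mpr fun s hs => ?_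
    simpa using htS s hs
  have hPx : P.eval x =
      (C (algebraMap A K t) * P).eval x * (algebraMap A K 1 * (algebraMap A K t)⁻¹) := by
    simp only [eval_mul, eval_C, map_one, one_mul]
    field_simp
  rw [hPx]
  exact mul_mem (eval_mem_ofField_of_eval_mem_range hM (fun a => hQ _ ⟨a, rfl⟩) hx)
    ⟨1, t, ht, rfl⟩

theorem isNUniversalIn_of_biInter_eq {ι : Type*} {R : ι → Set K} {I : Set ι} {T : Set K}
    {n : ℕ} {S : Finset A} (hS : ∀ s ∈ S, algebraMap A K s ∈ T) (hTR : ∀ i ∈ I, T ⊆ R i)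
    (hT : ⋂ i ∈ I, R i = T) (h : ∀ i ∈ I, IsNUniversalIn (R i) n S) : IsNUniversalIn T n S := by
  refine fun P hP => ⟨fun hPT s hs => hPT _ (hS s hs), fun hST x hx => ?_⟩
  rw [← hT]
  exact Set.mem_iInter₂.mpr fun i hi =>
    (h i hi P hP).mpr (fun s hs => hTR i hi (hST s hs)) x (hTR i hi hx)

end

/-- Local-global principle: if `X` is a set of prime ideals of `A` such that the
intersection of the localizations `A_𝔭` over `𝔭 ∈ X` (inside the fraction field `K`)
equals `A`, then `S` is `n`-universal in `A` if and only if `S` is `n`-universal in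
`A_𝔭` for all `𝔭 ∈ X`. -/
theorem stmt3 {A K : Type*} [CommRing A] [IsDomain A] [Field K] [Algebra A K]
    [IsFractionRing A K] (n : ℕ) (S : Finset A) (X : Set (Ideal A))
    (hprime : ∀ 𝔭 ∈ X, 𝔭.IsPrime)
    (hX : (⋂ 𝔭 ∈ X, locAt A K 𝔭) = Set.range (algebraMap A K)) :
    IsNUniversal A K n S ↔ ∀ 𝔭 ∈ X, IsNUniversalIn (locAt A K 𝔭) n S := by
  rw [isNUniversal_iff_isNUniversalIn_range]
  refine ⟨fun h 𝔭 h𝔭 => ?_, fun h => ?_⟩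
  · have := hprime 𝔭 h𝔭
    rw [locAt_eq_ofField]
    exact h.ofField _
  · refine isNUniversalIn_of_biInter_eq (fun s _ => ⟨s, rfl⟩) (fun 𝔭 h𝔭 => ?_) hX h
    have := hprime 𝔭 h𝔭
    exact range_subset_locAt 𝔭
end

section
/- Let A be a discrete valuation ring and let S ⊆ A be an n-optimal set, i.e., an n-universal set with exactly n+1 elements. Then S can be ordered to form a Newton sequence: there is an enumeration s_0, s_1, …, s_n of the elements of S such that for every 0 ≤ m ≤ n the set {s_0, …, s_m} is m-universal. -/
open scoped Classical

/-!
Build the sequence from its end. Among the elements of an `(n+1)`-universal set `S` of size `n + 2`, pick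
`t` for which `∏_{u ∈ S, u ≠ t} (t - u)` is divisible by all the analogous products
`∏_{u ∈ S, u ≠ s} (s - u)`; in a valuation ring divisibility is total, so such a `t` exists.
Then `S \ {t}` is `n`-universal: a polynomial of degree `≤ n` that is integral on `S \ {t}` is
its own Lagrange interpolant on `S \ {t}`, and the choice of `t` makes every Lagrange basis
polynomial integral at `t`, so the polynomial is integral on all of `S`. Iterating gives the
Newton sequence `s_n = t, s_{n-1}, …`.
-/

open Polynomial Finset

section DiffProd

variable {A : Type*} [CommRing A]

/-- The denominator `∏_{u ∈ S, u ≠ s} (s - u)` of the Lagrange basis polynomial at `s`. -/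
noncomputable def diffProd (S : Finset A) (s : A) : A :=
  ∏ u ∈ S.erase s, (s - u)

lemma diffProd_ne_zero [IsDomain A] (S : Finset A) (s : A) : diffProd S s ≠ 0 :=
  prod_ne_zero_iff.mpr fun _ hu => sub_ne_zero_of_ne (ne_of_mem_erase hu).symm

lemma diffProd_eq_sub_mul_diffProd_erase {S : Finset A} {i t : A} (ht : t ∈ S) (hit : i ≠ t) :
    diffProd S i = (i - t) * diffProd (S.erase t) i := by
  rw [diffProd, ← mul_prod_erase _ _ (mem_erase.mpr ⟨hit.symm, ht⟩), erase_right_comm]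
  rfl

lemma diffProd_erase_dvd_of_diffProd_dvd [IsDomain A] {S : Finset A} {i t : A} (ht : t ∈ S)
    (hi : i ∈ S.erase t) (hdvd : diffProd S i ∣ diffProd S t) :
    diffProd (S.erase t) i ∣ ∏ u ∈ (S.erase t).erase i, (t - u) := by
  have hit : i ≠ t := ne_of_mem_erase hi
  have hdiff_t : diffProd S t = (i - t) * -∏ u ∈ (S.erase t).erase i, (t - u) := by
    rw [diffProd, ← mul_prod_erase _ _ hi]
    ring
  rw [diffProd_eq_sub_mul_diffProd_erase ht hit, hdiff_t,
    mul_dvd_mul_iff_left (sub_ne_zero_of_ne hit)] at hdvd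
  exact dvd_neg.mp hdvd

lemma exists_mem_forall_diffProd_dvd [IsDomain A] [ValuationRing A] {S : Finset A}
    (hS : S.Nonempty) : ∃ t ∈ S, ∀ s ∈ S, diffProd S s ∣ diffProd S t := by
  obtain ⟨t, ht, hmax⟩ := S.exists_maximalFor (fun s => Associates.mk (diffProd S s)) hS
  refine ⟨t, ht, fun s hs => ?_⟩
  rcases ValuationRing.dvd_total (diffProd S s) (diffProd S t) with h | h
  · exact h
  · exact Associates.mk_le_mk_iff_dvd.mp (hmax hs (Associates.mk_le_mk_iff_dvd.mpr h))

end DiffProd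

lemma eval_lagrangeBasis_algebraMap {A K : Type*} [CommRing A] [Field K] [Algebra A K]
    (T : Finset A) (x i : A) :
    eval (algebraMap A K x) (Lagrange.basis T (algebraMap A K) i) =
      algebraMap A K (∏ u ∈ T.erase i, (x - u)) / algebraMap A K (diffProd T i) := by
  simp only [Lagrange.basis, Lagrange.basisDivisor, eval_prod, eval_mul, eval_C, eval_sub,
    eval_X, diffProd, map_prod, map_sub, prod_mul_distrib, prod_inv_distrib]
  ring

section Universal

variable {A K : Type*} [CommRing A] [IsDomain A] [Field K] [Algebra A K] [IsFractionRing A K]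

lemma exists_eval_eq_algebraMap_of_dvd {T : Finset A} {P : K[X]} (hP : P.degree < #T)
    (hT : ∀ i ∈ T, ∃ b : A, eval (algebraMap A K i) P = algebraMap A K b) {x : A}
    (hx : ∀ i ∈ T, diffProd T i ∣ ∏ u ∈ T.erase i, (x - u)) :
    ∃ b : A, eval (algebraMap A K x) P = algebraMap A K b := by
  have hinj : Set.InjOn (algebraMap A K) T := (IsFractionRing.injective A K).injOn
  suffices eval (algebraMap A K x) P ∈ (algebraMap A K).range from
    let ⟨b, hb⟩ := this; ⟨b, hb.symm⟩
  rw [Lagrange.eq_interpolate hinj hP, Lagrange.interpolate_apply, eval_finsetSum]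
  refine Subring.sum_mem _ fun i hi => ?_
  obtain ⟨b, hb⟩ := hT i hi
  obtain ⟨c, hc⟩ := hx i hi
  have hden : algebraMap A K (diffProd T i) ≠ 0 :=
    (map_ne_zero_iff _ (IsFractionRing.injective A K)).mpr (diffProd_ne_zero T i)
  refine ⟨b * c, ?_⟩
  rw [eval_mul, eval_C, hb, eval_lagrangeBasis_algebraMap, hc, map_mul, map_mul,
    mul_div_cancel_left₀ _ hden]

lemma IsNUniversal.erase_of_forall_diffProd_dvd {n : ℕ} {S : Finset A} {t : A}
    (hS : IsNUniversal A K (n + 1) S) (ht : t ∈ S) (hn : n < #(S.erase t))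
    (hmax : ∀ s ∈ S, diffProd S s ∣ diffProd S t) : IsNUniversal A K n (S.erase t) := by
  intro P hP
  refine ⟨fun h s _ => h s, fun h => (hS P (hP.trans n.le_succ)).mpr fun s hs => ?_⟩
  by_cases hst : s = t
  · subst hst
    have hdeg : P.degree < #(S.erase s) :=
      P.degree_le_natDegree.trans_lt (by exact_mod_cast hP.trans_lt hn)
    exact exists_eval_eq_algebraMap_of_dvd hdeg h fun i hi =>
      diffProd_erase_dvd_of_diffProd_dvd ht hi (hmax i (mem_of_mem_erase hi))
  · exact h s (mem_erase.mpr ⟨hst, hs⟩)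

lemma exists_image_range_eq_forall_isNUniversal [ValuationRing A] (n : ℕ) (S : Finset A)
    (hcard : #S = n + 1) (hS : IsNUniversal A K n S) :
    ∃ s : ℕ → A, (range (n + 1)).image s = S ∧
      ∀ m ≤ n, IsNUniversal A K m ((range (m + 1)).image s) := by
  induction n generalizing S with
  | zero =>
    obtain ⟨a, rfl⟩ := card_eq_one.mp hcard
    refine ⟨fun _ => a, by simp, fun m hm => ?_⟩
    obtain rfl := Nat.le_zero.mp hm
    simpa using hS
  | succ n ih =>
    obtain ⟨t, ht, hmax⟩ := exists_mem_forall_diffProd_dvd (S := S) (card_pos.mp (by omega))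
    have hcard' : #(S.erase t) = n + 1 := by rw [card_erase_of_mem ht, hcard]; rfl
    obtain ⟨s, himg, huniv⟩ :=
      ih _ hcard' (hS.erase_of_forall_diffProd_dvd ht (by omega) hmax)
    have himg_update : ∀ m ≤ n,
        (range (m + 1)).image (Function.update s (n + 1) t) = (range (m + 1)).image s :=
      fun m hm => image_congr fun k hk =>
        Function.update_of_ne (by rw [coe_range, Set.mem_Iio] at hk; omega) _ _
    have hfull : (range (n + 2)).image (Function.update s (n + 1) t) = S := by
      rw [range_add_one, image_insert, Function.update_self, himg_update n le_rfl, himg,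
        insert_erase ht]
    refine ⟨_, hfull, fun m hm => ?_⟩
    rcases Nat.le_succ_iff.mp hm with hm | rfl
    · rw [himg_update m hm]
      exact huniv m hm
    · rwa [hfull]

end Universal

/-- In a discrete valuation ring, an `n`-optimal set (an `n`-universal set with exactly
`n + 1` elements) can be ordered to form a Newton sequence: there is an enumeration
`s 0, s 1, …, s n` of the elements of `S` such that for every `m ≤ n` the set
`{s 0, …, s m}` is `m`-universal. -/
theorem stmt6 {A K : Type*} [CommRing A] [IsDomain A] [IsDiscreteValuationRing A] [Field K]
    [Algebra A K] [IsFractionRing A K] (n : ℕ) (S : Finset A)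
    (hcard : S.card = n + 1) (hS : IsNUniversal A K n S) :
    ∃ s : ℕ → A, Set.InjOn s (Set.Iic n) ∧ Finset.image s (Finset.range (n + 1)) = S ∧
      ∀ m : ℕ, m ≤ n → IsNUniversal A K m (Finset.image s (Finset.range (m + 1))) := by
  obtain ⟨s, himg, huniv⟩ := exists_image_range_eq_forall_isNUniversal n S hcard hS
  have hinj : Set.InjOn s (range (n + 1)) :=
    card_image_iff.mp (by rw [himg, hcard, card_range])
  refine ⟨s, ?_, himg, huniv⟩
  rwa [coe_range, Set.Iio_add_one_eq_Iic] at hinj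
end

section
/- Let X be a finite set, n and m positive integers, and μ_1, …, μ_{n+m} probability measures on X. Let P be the probability, under the product measure μ_1 ⊗ ⋯ ⊗ μ_{n+m} on X^{n+m}, of the event that the set {x_1, …, x_{n+m}} has at most n distinct elements. Then P ≤ Σ_A ∏_{i=1}^{n} ( Σ_{x∈X} (1/|A_i|) Σ_{j∈A_i} μ_j(x)^{|A_i|} ), where the outer sum runs over all m-partitions A = {A_1, …, A_n}, i.e., all partitions of {1, 2, …, n+m} into exactly n non-empty pairwise disjoint blocks A_1, …, A_n. -/
open scoped Classical
open Finset
set_option maxHeartbeats 2000000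

section Aux
variable {ι : Type*} [DecidableEq ι]

/-- A partition of `U` into at most `U.card` blocks can be refined into one with exactly
`d` more blocks (as long as that stays `≤ U.card`). -/
lemma refine_partition_aux (U : Finset ι) :
    ∀ d (B : Finset (Finset (ι))), (∀ A ∈ B, A.Nonempty) →
    (∀ A ∈ B, ∀ A' ∈ B, A ≠ A' → Disjoint A A') → B.sup id = U →
    B.card + d ≤ U.card →
    ∃ C : Finset (Finset (ι)), C.card = B.card + d ∧ (∀ A ∈ C, A.Nonempty) ∧
      (∀ A ∈ C, ∀ A' ∈ C, A ≠ A' → Disjoint A A') ∧ C.sup id = U ∧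
      ∀ A ∈ C, ∃ A' ∈ B, A ⊆ A' := by
  intro d
  induction d with
  | zero =>
    intro B h1 h2 h3 _
    exact ⟨B, by simp, h1, h2, h3, fun A hA => ⟨A, hA, subset_rfl⟩⟩
  | succ d ih =>
    intro B h1 h2 h3 h4
    have hUcard : U.card = ∑ A ∈ B, A.card := by
      rw [← h3, Finset.sup_eq_biUnion]
      exact Finset.card_biUnion h2
    -- find a block with at least two elements
    have hbig : ∃ A ∈ B, 2 ≤ A.card := by
      by_contra hcon
      push_neg at hcon
      have : ∑ A ∈ B, A.card ≤ ∑ _A ∈ B, 1 := by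
        refine Finset.sum_le_sum fun A hA => ?_
        have := hcon A hA
        omega
      simp only [Finset.sum_const, smul_eq_mul, mul_one] at this
      have h5 : ∑ A ∈ B, A.card ≤ B.card := this
      omega
    obtain ⟨A, hAB, hA2⟩ := hbig
    obtain ⟨a, ha⟩ := h1 A hAB
    obtain ⟨b, hb, hba⟩ := Finset.exists_mem_ne (s := A) (by omega) a
    set A1 : Finset ι := A \ {a} with hA1def
    have haA1 : a ∉ A1 := by simp [hA1def]
    have hbA1 : b ∈ A1 := by simp [hA1def, hb, hba]
    have hA1sub : A1 ⊆ A := Finset.sdiff_subset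
    have hsing_sub : ({a} : Finset ι) ⊆ A := by simpa using ha
    have hsingA1 : ({a} : Finset ι) ≠ A1 := fun h => haA1 (h ▸ Finset.mem_singleton_self a)
    have hsing_ne : ({a} : Finset ι) ∉ B.erase A := by
      intro h
      have h' := h2 _ (Finset.mem_of_mem_erase h) A hAB (Finset.ne_of_mem_erase h)
      exact (Finset.disjoint_left.1 h') (Finset.mem_singleton_self a) ha
    have hA1_ne : A1 ∉ B.erase A := by
      intro h
      have h' := h2 _ (Finset.mem_of_mem_erase h) A hAB (Finset.ne_of_mem_erase h)
      exact (Finset.disjoint_left.1 h') hbA1 (hA1sub hbA1)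
    set B' : Finset (Finset (ι)) := insert {a} (insert A1 (B.erase A)) with hB'def
    have hsingB' : ({a} : Finset ι) ∉ insert A1 (B.erase A) := by
      simp only [Finset.mem_insert]
      rintro (h | h)
      · exact hsingA1 h
      · exact hsing_ne h
    have hcardB' : B'.card = B.card + 1 := by
      rw [hB'def, Finset.card_insert_of_notMem hsingB',
        Finset.card_insert_of_notMem hA1_ne, Finset.card_erase_of_mem hAB]
      have : 0 < B.card := Finset.card_pos.2 ⟨A, hAB⟩
      omega
    have hunion : ({a} : Finset ι) ∪ A1 = A := by
      ext t
      simp only [Finset.mem_union, Finset.mem_singleton, hA1def, Finset.mem_sdiff]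
      constructor
      · rintro (rfl | ⟨h, _⟩) <;> [exact ha; exact h]
      · intro h
        by_cases ht : t = a
        · exact Or.inl ht
        · exact Or.inr ⟨h, by simpa using ht⟩
    -- membership helper
    have hmem : ∀ D ∈ B', D = {a} ∨ D = A1 ∨ (D ∈ B ∧ D ≠ A) := by
      intro D hD
      simp only [hB'def, Finset.mem_insert] at hD
      rcases hD with h | h | h
      · exact Or.inl h
      · exact Or.inr (Or.inl h)
      · exact Or.inr (Or.inr ⟨Finset.mem_of_mem_erase h, Finset.ne_of_mem_erase h⟩)
    have hdisjA : ∀ D ∈ B, D ≠ A → Disjoint D A := fun D hD h => h2 D hD A hAB h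
    have h1' : ∀ D ∈ B', D.Nonempty := by
      intro D hD
      rcases hmem D hD with rfl | rfl | ⟨h, _⟩
      · exact ⟨a, Finset.mem_singleton_self a⟩
      · exact ⟨b, hbA1⟩
      · exact h1 D h
    have h2' : ∀ D ∈ B', ∀ D' ∈ B', D ≠ D' → Disjoint D D' := by
      intro D hD D' hD' hne
      rcases hmem D hD with rfl | rfl | ⟨h, hne1⟩ <;>
        rcases hmem D' hD' with rfl | rfl | ⟨h', hne1'⟩
      · exact absurd rfl hne
      · exact Finset.disjoint_singleton_left.2 haA1
      · exact (hdisjA D' h' hne1').symm.mono_left hsing_sub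
      · exact (Finset.disjoint_singleton_left.2 haA1).symm
      · exact absurd rfl hne
      · exact (hdisjA D' h' hne1').symm.mono_left hA1sub
      · exact (hdisjA D h hne1).mono_right hsing_sub
      · exact (hdisjA D h hne1).mono_right hA1sub
      · exact h2 D h D' h' hne
    have h3' : B'.sup id = U := by
      apply Finset.Subset.antisymm
      · intro i hi
        obtain ⟨D, hD, hiD⟩ := Finset.mem_sup.1 hi
        rw [← h3]
        rcases hmem D hD with rfl | rfl | ⟨hDB, -⟩
        · exact Finset.mem_sup.2 ⟨A, hAB, hsing_sub hiD⟩
        · exact Finset.mem_sup.2 ⟨A, hAB, hA1sub hiD⟩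
        · exact Finset.mem_sup.2 ⟨D, hDB, hiD⟩
      · intro i hi
        rw [← h3] at hi
        obtain ⟨D, hD, hiD⟩ := Finset.mem_sup.1 hi
        by_cases hDA : D = A
        · subst hDA
          have : i ∈ ({a} : Finset ι) ∪ A1 := hunion ▸ hiD
          rcases Finset.mem_union.1 this with h | h
          · exact Finset.mem_sup.2 ⟨{a}, by simp [hB'def], h⟩
          · exact Finset.mem_sup.2 ⟨A1, by simp [hB'def], h⟩
        · exact Finset.mem_sup.2 ⟨D, by simp [hB'def, Finset.mem_erase, hDA, hD], hiD⟩
    obtain ⟨C, hC1, hC2, hC3, hC4, hC5⟩ := ih B' h1' h2' h3' (by omega)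
    refine ⟨C, by omega, hC2, hC3, hC4, ?_⟩
    intro E hE
    obtain ⟨D, hD, hED⟩ := hC5 E hE
    rcases hmem D hD with rfl | rfl | ⟨h, _⟩
    · exact ⟨A, hAB, hED.trans hsing_sub⟩
    · exact ⟨A, hAB, hED.trans hA1sub⟩
    · exact ⟨D, h, hED⟩

/-- For any `x` whose image has at most `n` values (`n ≤ |ι|`), there is a partition of the
domain into exactly `n` nonempty blocks on each of which `x` is constant. -/
lemma exists_partition {ι X : Type*} [Fintype ι] [DecidableEq ι] [DecidableEq X]
    (n : ℕ) (x : ι → X) (hcard : (Finset.univ.image x).card ≤ n) (hn : n ≤ Fintype.card ι) :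
    ∃ B : Finset (Finset (ι)), (B.card = n ∧ (∀ A ∈ B, A.Nonempty) ∧
      (∀ A ∈ B, ∀ A' ∈ B, A ≠ A' → Disjoint A A') ∧ B.sup id = Finset.univ) ∧
      ∀ A ∈ B, ∀ i ∈ A, ∀ j ∈ A, x i = x j := by
  set B0 : Finset (Finset (ι)) :=
    (Finset.univ.image x).image (fun v => Finset.univ.filter fun i => x i = v) with hB0
  have hB0card : B0.card ≤ n := le_trans (Finset.card_image_le) hcard
  have hB0mem : ∀ A ∈ B0, ∃ v, A = Finset.univ.filter fun i => x i = v := by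
    intro A hA
    obtain ⟨v, _, hv⟩ := Finset.mem_image.1 hA
    exact ⟨v, hv.symm⟩
  have h1 : ∀ A ∈ B0, A.Nonempty := by
    intro A hA
    obtain ⟨v, hv, hveq⟩ := Finset.mem_image.1 hA
    obtain ⟨i, _, hi⟩ := Finset.mem_image.1 hv
    exact ⟨i, hveq ▸ (by simp [hi])⟩
  have h2 : ∀ A ∈ B0, ∀ A' ∈ B0, A ≠ A' → Disjoint A A' := by
    intro A hA A' hA' hne
    obtain ⟨v, rfl⟩ := hB0mem A hA
    obtain ⟨w, rfl⟩ := hB0mem A' hA'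
    rw [Finset.disjoint_left]
    intro i hi hi'
    simp only [Finset.mem_filter] at hi hi'
    exact hne (by rw [← hi.2, ← hi'.2])
  have h3 : B0.sup id = Finset.univ := by
    refine Finset.eq_univ_of_forall fun i => ?_
    refine Finset.mem_sup.2 ⟨Finset.univ.filter fun j => x j = x i, ?_, by simp⟩
    exact Finset.mem_image.2 ⟨x i, Finset.mem_image.2 ⟨i, Finset.mem_univ i, rfl⟩, rfl⟩
  obtain ⟨C, hC1, hC2, hC3, hC4, hC5⟩ := refine_partition_aux Finset.univ (n - B0.card) B0 h1 h2 h3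
    (by rw [Finset.card_univ]; omega)
  refine ⟨C, ⟨by omega, hC2, hC3, hC4⟩, ?_⟩
  intro A hA i hi j hj
  obtain ⟨A', hA', hsub⟩ := hC5 A hA
  obtain ⟨v, rfl⟩ := hB0mem A' hA'
  have hi' := Finset.mem_filter.1 (hsub hi)
  have hj' := Finset.mem_filter.1 (hsub hj)
  rw [hi'.2, hj'.2]

end Aux

/-- AM-GM step. -/
lemma amgm_step {ι : Type*} (A : Finset ι) (hA : A.Nonempty) (f : ι → ℝ)
    (hf : ∀ j, 0 ≤ f j) :
    ∏ j ∈ A, f j ≤ (1 / (A.card : ℝ)) * ∑ j ∈ A, f j ^ A.card := by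
  have hc : (A.card : ℝ) ≠ 0 := Nat.cast_ne_zero.2 (Finset.card_pos.2 hA).ne'
  have h := Real.geom_mean_le_arith_mean_weighted A (fun _ => 1 / (A.card : ℝ))
    (fun j => f j ^ A.card) (fun _ _ => by positivity)
    (by simp [Finset.sum_const, mul_one_div_cancel hc, hc])
    (fun j _ => pow_nonneg (hf j) _)
  calc ∏ j ∈ A, f j = ∏ j ∈ A, (f j ^ A.card) ^ (1 / (A.card : ℝ)) := by
        refine Finset.prod_congr rfl fun j _ => ?_
        rw [← Real.rpow_natCast (f j) A.card, ← Real.rpow_mul (hf j),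
          mul_one_div_cancel hc, Real.rpow_one]
    _ ≤ ∑ j ∈ A, (1 / (A.card : ℝ)) * f j ^ A.card := h
    _ = (1 / (A.card : ℝ)) * ∑ j ∈ A, f j ^ A.card := by rw [Finset.mul_sum]

/-- Counting step: the measure of "constant on each block of `B`" is the product over blocks. -/
lemma count_le {ι X : Type*} [Fintype ι] [Fintype X] [DecidableEq ι] [DecidableEq X]
    (μ : ι → X → ℝ) (hμ0 : ∀ j x, 0 ≤ μ j x)
    (B : Finset (Finset (ι))) (hne : ∀ A ∈ B, A.Nonempty)
    (hdisj : ∀ A ∈ B, ∀ A' ∈ B, A ≠ A' → Disjoint A A') (hsup : B.sup id = Finset.univ)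
    (T : Finset (ι → X)) (hTmem : ∀ x ∈ T, ∀ A ∈ B, ∀ i ∈ A, ∀ j ∈ A, x i = x j) :
    ∑ x ∈ T, ∏ i, μ i (x i) ≤ ∏ A ∈ B, ∑ v : X, ∏ j ∈ A, μ j v := by
  classical
  set rep : ↥B → ι := fun A => (hne A.1 A.2).choose with hrep
  have hrepmem : ∀ A : ↥B, rep A ∈ A.1 := fun A => (hne A.1 A.2).choose_spec
  set π : (ι → X) → (↥B → X) := fun x A => x (rep A) with hπ
  have hcover : ∀ i : ι, ∃ A ∈ B, i ∈ A := by
    intro i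
    have : i ∈ B.sup id := hsup ▸ Finset.mem_univ i
    obtain ⟨A, hA, hiA⟩ := Finset.mem_sup.1 this
    exact ⟨A, hA, hiA⟩
  have hinj : ∀ x ∈ T, ∀ y ∈ T, π x = π y → x = y := by
    intro x hx y hy hxy
    funext i
    obtain ⟨A, hA, hiA⟩ := hcover i
    have h1 := hTmem x hx A hA i hiA (rep ⟨A, hA⟩) (hrepmem ⟨A, hA⟩)
    have h2 := hTmem y hy A hA i hiA (rep ⟨A, hA⟩) (hrepmem ⟨A, hA⟩)
    rw [h1, h2, show x (rep ⟨A, hA⟩) = π x ⟨A, hA⟩ from rfl, hxy]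
  set F : (↥B → X) → ℝ := fun p => ∏ A : ↥B, ∏ j ∈ A.1, μ j (p A) with hF
  have hvalF : ∀ x ∈ T, ∏ i, μ i (x i) = F (π x) := by
    intro x hx
    have huniv : (Finset.univ : Finset ι) = B.biUnion (fun A => A) := by
      rw [← Finset.sup_eq_biUnion]; exact hsup.symm
    rw [huniv, Finset.prod_biUnion (fun A hA A' hA' h => hdisj A hA A' hA' h)]
    rw [hF, ← Finset.prod_coe_sort B (fun A => ∏ j ∈ A, μ j (x j))]
    refine Finset.prod_congr rfl fun A _ => Finset.prod_congr rfl fun j hj => ?_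
    rw [hTmem x hx A.1 A.2 j hj (rep A) (hrepmem A)]
  calc ∑ x ∈ T, ∏ i, μ i (x i) = ∑ x ∈ T, F (π x) := Finset.sum_congr rfl hvalF
    _ = ∑ p ∈ T.image π, F p := (Finset.sum_image hinj).symm
    _ ≤ ∑ p : ↥B → X, F p := by
        refine Finset.sum_le_sum_of_subset_of_nonneg (Finset.subset_univ _) ?_
        intro p _ _
        exact Finset.prod_nonneg fun A _ => Finset.prod_nonneg fun j _ => hμ0 j _
    _ = ∑ p : ↥B → X, ∏ A : ↥B, ∏ j ∈ A.1, μ j (p A) := by rw [hF]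
    _ = ∏ A : ↥B, ∑ v : X, ∏ j ∈ A.1, μ j v := (Fintype.prod_sum (fun (A : ↥B) (v : X) => ∏ j ∈ A.1, μ j v)).symm
    _ = ∏ A ∈ B, ∑ v : X, ∏ j ∈ A, μ j v := Finset.prod_coe_sort B (fun A => ∑ v : X, ∏ j ∈ A, μ j v)

/-- Let `X` be a finite set, `n, m` positive integers, and `μ 1, …, μ (n+m)`
probability measures on `X` (identified with non-negative functions summing to `1`).
Let `P` be the probability, under the product measure, that the values of `n + m`
independent random variables with laws `μ i` form a set with at most `n` distinct
elements. Then `P` is at most the sum, over all partitions `B` of `{1, …, n+m}` into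
exactly `n` non-empty pairwise disjoint blocks, of
`∏_{A ∈ B} (∑_{x ∈ X} (1/|A|) ∑_{j ∈ A} μ j x ^ |A|)`. -/
theorem stmt17 {X : Type*} [Fintype X] (n m : ℕ) (hn : 0 < n) (hm : 0 < m)
    (μ : Fin (n + m) → X → ℝ) (hμ0 : ∀ j x, 0 ≤ μ j x) (hμ1 : ∀ j, ∑ x : X, μ j x = 1) :
    (∑ x : Fin (n + m) → X,
        if (Finset.univ.image x).card ≤ n then ∏ i, μ i (x i) else 0) ≤
      ∑ B : Finset (Finset (Fin (n + m))),
        if B.card = n ∧ (∀ A ∈ B, A.Nonempty) ∧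
            (∀ A ∈ B, ∀ A' ∈ B, A ≠ A' → Disjoint A A') ∧
            B.sup id = Finset.univ then
          ∏ A ∈ B, ∑ x : X, (1 / (A.card : ℝ)) * ∑ j ∈ A, μ j x ^ (A.card)
        else 0 := by
  classical
  set P : Finset (Finset (Fin (n + m))) → Prop := fun B => B.card = n ∧ (∀ A ∈ B, A.Nonempty) ∧
    (∀ A ∈ B, ∀ A' ∈ B, A ≠ A' → Disjoint A A') ∧ B.sup id = Finset.univ with hP
  set W : Finset (Finset (Fin (n + m))) → ℝ :=
    fun B => ∏ A ∈ B, ∑ x : X, (1 / (A.card : ℝ)) * ∑ j ∈ A, μ j x ^ (A.card) with hW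
  have hnle : n ≤ Fintype.card (Fin (n + m)) := by simp
  -- choose a partition for each good x
  have hchoice : ∀ x : Fin (n + m) → X, (Finset.univ.image x).card ≤ n →
      ∃ B : Finset (Finset (Fin (n + m))), P B ∧ ∀ A ∈ B, ∀ i ∈ A, ∀ j ∈ A, x i = x j :=
    fun x hx => exists_partition n x hx hnle
  set σ : (Fin (n + m) → X) → Finset (Finset (Fin (n + m))) := fun x =>
    if h : (Finset.univ.image x).card ≤ n then (hchoice x h).choose else ∅ with hσ
  set S := Finset.univ.filter (fun x : Fin (n + m) → X => (Finset.univ.image x).card ≤ n) with hS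
  set t := Finset.univ.filter P with ht
  have hmaps : ∀ x ∈ S, σ x ∈ t := by
    intro x hx
    have hx' := (Finset.mem_filter.1 hx).2
    rw [hσ]
    simp only [dif_pos hx']
    exact Finset.mem_filter.2 ⟨Finset.mem_univ _, ((hchoice x hx').choose_spec).1⟩
  have hσconst : ∀ x ∈ S, ∀ A ∈ σ x, ∀ i ∈ A, ∀ j ∈ A, x i = x j := by
    intro x hx
    have hx' := (Finset.mem_filter.1 hx).2
    rw [hσ]
    simp only [dif_pos hx']
    exact ((hchoice x hx').choose_spec).2
  have hLHS : (∑ x : Fin (n + m) → X,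
      if (Finset.univ.image x).card ≤ n then ∏ i, μ i (x i) else 0)
      = ∑ x ∈ S, ∏ i, μ i (x i) := (Finset.sum_filter _ _).symm
  have hRHS : (∑ B : Finset (Finset (Fin (n + m))), if P B then W B else 0) = ∑ B ∈ t, W B :=
    (Finset.sum_filter _ _).symm
  rw [hLHS]
  rw [show (∑ B : Finset (Finset (Fin (n + m))),
        if B.card = n ∧ (∀ A ∈ B, A.Nonempty) ∧
            (∀ A ∈ B, ∀ A' ∈ B, A ≠ A' → Disjoint A A') ∧
            B.sup id = Finset.univ then
          ∏ A ∈ B, ∑ x : X, (1 / (A.card : ℝ)) * ∑ j ∈ A, μ j x ^ (A.card)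
        else 0) = ∑ B ∈ t, W B from hRHS]
  rw [← Finset.sum_fiberwise_of_maps_to hmaps (fun x => ∏ i, μ i (x i))]
  refine Finset.sum_le_sum fun B hB => ?_
  obtain ⟨-, hB1, hB2, hB3, hB4⟩ : B ∈ Finset.univ ∧ B.card = n ∧ (∀ A ∈ B, A.Nonempty) ∧
      (∀ A ∈ B, ∀ A' ∈ B, A ≠ A' → Disjoint A A') ∧ B.sup id = Finset.univ := by
    have := Finset.mem_filter.1 hB
    exact ⟨this.1, this.2.1, this.2.2.1, this.2.2.2.1, this.2.2.2.2⟩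
  have step2 : ∑ x ∈ S.filter (fun x => σ x = B), ∏ i, μ i (x i)
      ≤ ∏ A ∈ B, ∑ v : X, ∏ j ∈ A, μ j v := by
    refine count_le μ hμ0 B hB2 hB3 hB4 _ ?_
    intro x hx A hA i hi j hj
    obtain ⟨hxS, hxB⟩ := Finset.mem_filter.1 hx
    exact hσconst x hxS A (hxB ▸ hA) i hi j hj
  have step3 : (∏ A ∈ B, ∑ v : X, ∏ j ∈ A, μ j v) ≤ W B := by
    rw [hW]
    refine Finset.prod_le_prod (fun A _ => Finset.sum_nonneg fun v _ =>
      Finset.prod_nonneg fun j _ => hμ0 j v) (fun A hA => Finset.sum_le_sum fun v _ => ?_)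
    exact amgm_step A (hB2 A hA) (fun j => μ j v) (fun j => hμ0 j v)
  exact le_trans step2 step3
end
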